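/- arXiv:2308.13255 — 4 statements merged into one kernel-verified Lean document; each statement's English description precedes it below -/
import Mathlib

section
/- Let k ≥ 2, r ≥ 2 and 1 ≤ ℓ ≤ k-1. Set q = (ℓ-1) + ⌊k/(k-ℓ)⌋·(k-ℓ) and c₀ = 2k²·R̂_r(P_q^{(k-1,ℓ-1)}). Then for all n ≥ c₀ we have R̂_r(P_n^{(k,ℓ)}) ≥ (1/k)·R̂_r(P_q^{(k-1,ℓ-1)})·R_r(P_{n-c₀}^{(k,ℓ)}). In particular, if ℓ = k-1 then R̂_r(P_n^{(k)}) ≥ (1/k)·R̂_r(P_{2k-2}^{(k-1)})·R_r(P_{n-c₀}^{(k)}). -/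
open Finset

/-- A `k`-uniform hypergraph, given by its (finite) edge set; vertices are natural numbers. -/
def IsUniform (k : ℕ) (G : Finset (Finset ℕ)) : Prop :=
  ∀ e ∈ G, e.card = k

/-- The vertex set of a hypergraph. -/
def hVerts (G : Finset (Finset ℕ)) : Finset ℕ := G.biUnion id

/-- `G` contains a copy of `H`, i.e. a subgraph isomorphic to `H`. -/
def IsCopy (H G : Finset (Finset ℕ)) : Prop :=
  ∃ f : ℕ → ℕ, Set.InjOn f ↑(hVerts H) ∧ ∀ e ∈ H, e.image f ∈ G

/-- `G →_r H`: every `r`-coloring of the edges of `G` yields a monochromatic copy of `H`. -/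
def Arrows (r : ℕ) (G H : Finset (Finset ℕ)) : Prop :=
  ∀ χ : Finset ℕ → Fin r, ∃ c : Fin r, IsCopy H (G.filter fun e => χ e = c)

/-- The `r`-color size-Ramsey number of `H`: the minimum number of edges of a
`k`-uniform hypergraph `G` with `G →_r H`. -/
noncomputable def sizeRamsey (k r : ℕ) (H : Finset (Finset ℕ)) : ℕ :=
  sInf {m | ∃ G : Finset (Finset ℕ), IsUniform k G ∧ Arrows r G H ∧ G.card = m}

/-- The `r`-color Ramsey number of `H`: the minimum number of vertices of a
`k`-uniform hypergraph `G` with `G →_r H`. -/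
noncomputable def vertexRamsey (k r : ℕ) (H : Finset (Finset ℕ)) : ℕ :=
  sInf {m | ∃ G : Finset (Finset ℕ), IsUniform k G ∧ Arrows r G H ∧ (hVerts G).card = m}

/-- The `(k,ℓ)`-path with `m` edges: edge `i` (for `0 ≤ i < m`) is
`{i(k-ℓ), i(k-ℓ)+1, …, i(k-ℓ)+k-1}`. -/
def pathWithEdges (k l m : ℕ) : Finset (Finset ℕ) :=
  (Finset.range m).image fun i => (Finset.range k).image fun j => i * (k - l) + j

/-- The `(k,ℓ)`-path on `n` vertices, `P_n^{(k,ℓ)}`; it has `(n-ℓ)/(k-ℓ)` edges. -/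
def hPath (k l n : ℕ) : Finset (Finset ℕ) :=
  pathWithEdges k l ((n - l) / (k - l))


/-! ### Infrastructure -/

/-- Edge `i` of a path with uniformity `k` and step `a`. -/
def pe (k a i : ℕ) : Finset ℕ := (Finset.range k).image fun j => i * a + j

lemma pe_card (k a i : ℕ) : (pe k a i).card = k := by
  rw [pe, Finset.card_image_of_injective _ (add_right_injective _), Finset.card_range]

lemma mem_pe {k a i x : ℕ} : x ∈ pe k a i ↔ i * a ≤ x ∧ x < i * a + k := by
  simp only [pe, Finset.mem_image, Finset.mem_range]
  constructor
  · rintro ⟨j, hj, rfl⟩; omega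
  · rintro ⟨h1, h2⟩; exact ⟨x - i * a, by omega, by omega⟩

lemma mem_pathWithEdges {k l a m : ℕ} (ha : k - l = a) {e : Finset ℕ} :
    e ∈ pathWithEdges k l m ↔ ∃ i < m, e = pe k a i := by
  subst ha
  simp only [pathWithEdges, Finset.mem_image, Finset.mem_range, pe]
  constructor
  · rintro ⟨i, hi, rfl⟩; exact ⟨i, hi, rfl⟩
  · rintro ⟨i, hi, rfl⟩; exact ⟨i, hi, rfl⟩

lemma pathWithEdges_uniform (k l m : ℕ) : IsUniform k (pathWithEdges k l m) := by
  intro e he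
  rw [mem_pathWithEdges rfl] at he
  obtain ⟨i, _, rfl⟩ := he
  exact pe_card _ _ _

lemma pe_subset_hVerts {k l a m i : ℕ} (ha : k - l = a) (hi : i < m) :
    pe k a i ⊆ hVerts (pathWithEdges k l m) := by
  intro x hx
  exact Finset.mem_biUnion.2 ⟨pe k a i, (mem_pathWithEdges ha).2 ⟨i, hi, rfl⟩, hx⟩

lemma hVerts_path {k l a m : ℕ} (ha : k - l = a) (ha1 : 1 ≤ a) (hak : a ≤ k) (hm : 1 ≤ m) :
    hVerts (pathWithEdges k l m) = Finset.range ((m - 1) * a + k) := by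
  ext x
  simp only [hVerts, Finset.mem_biUnion, id, Finset.mem_range]
  constructor
  · rintro ⟨e, he, hx⟩
    rw [mem_pathWithEdges ha] at he
    obtain ⟨i, hi, rfl⟩ := he
    rw [mem_pe] at hx
    have : i * a ≤ (m - 1) * a := Nat.mul_le_mul_right a (by omega)
    omega
  · intro hx
    set i := min (x / a) (m - 1) with hi
    refine ⟨pe k a i, (mem_pathWithEdges ha).2 ⟨i, by omega, rfl⟩, mem_pe.2 ?_⟩
    have h1 : x / a * a ≤ x := Nat.div_mul_le_self x a
    have h2 : x < x / a * a + a := by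
      have hd := Nat.div_add_mod x a
      have hm : x % a < a := Nat.mod_lt _ ha1
      have : a * (x / a) = x / a * a := Nat.mul_comm _ _
      omega
    rcases le_total (x / a) (m - 1) with h | h
    · have : i = x / a := by omega
      rw [this]; omega
    · have hieq : i = m - 1 := by omega
      have : (m - 1) * a ≤ x / a * a := Nat.mul_le_mul_right a h
      rw [hieq]; omega

/-- The empty path (0 edges). -/
lemma pathWithEdges_zero (k l : ℕ) : pathWithEdges k l 0 = ∅ := by
  simp [pathWithEdges]

lemma isCopy_empty (G : Finset (Finset ℕ)) : IsCopy ∅ G :=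
  ⟨id, by simp [hVerts], by simp⟩

lemma arrows_empty_path {r k l : ℕ} (hr : 0 < r) (G : Finset (Finset ℕ)) :
    Arrows r G (pathWithEdges k l 0) := by
  intro χ
  have : Nonempty (Fin r) := ⟨⟨0, hr⟩⟩
  exact ⟨Classical.arbitrary _, by rw [pathWithEdges_zero]; exact isCopy_empty _⟩

lemma vertexRamsey_eq_zero {r k k' l : ℕ} (hr : 0 < r) :
    vertexRamsey k' r (pathWithEdges k l 0) = 0 := by
  have : 0 ∈ {m | ∃ G : Finset (Finset ℕ), IsUniform k' G ∧ Arrows r G (pathWithEdges k l 0) ∧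
      (hVerts G).card = m} :=
    ⟨∅, fun e he => absurd he (Finset.notMem_empty e), arrows_empty_path hr ∅, by simp [hVerts]⟩
  exact Nat.le_zero.1 (Nat.sInf_le this)

/-- Degree of a vertex. -/
def hdeg (G : Finset (Finset ℕ)) (v : ℕ) : ℕ := (G.filter fun e => v ∈ e).card

lemma sum_hdeg {k : ℕ} {G : Finset (Finset ℕ)} (hG : IsUniform k G) :
    ∑ v ∈ hVerts G, hdeg G v = k * G.card := by
  unfold hdeg
  simp only [Finset.card_filter]
  rw [Finset.sum_comm]
  rw [Finset.sum_congr rfl (fun e he => ?_), Finset.sum_const, smul_eq_mul, mul_comm]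
  have hsub : e ⊆ hVerts G := fun x hx => Finset.mem_biUnion.2 ⟨e, he, hx⟩
  calc (∑ v ∈ hVerts G, if v ∈ e then 1 else 0) = (hVerts G ∩ e).card := by
        rw [Finset.sum_ite_mem]; simp
    _ = e.card := by rw [Finset.inter_eq_right.2 hsub]
    _ = k := hG e he

lemma pred_mul_add {m a : ℕ} (hm : 1 ≤ m) : (m - 1) * a + a = m * a := by
  cases m with
  | zero => omega
  | succ m => simp [Nat.succ_sub_one, Nat.succ_mul]

/-! ### Greedy rank function -/

noncomputable def rnk (P : ℕ → ℕ → Prop) : ℕ → ℕ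
  | b => sInf {j | ∀ b', (h : b' < b) → P b b' → rnk P b' ≠ j}
  termination_by b => b
  decreasing_by exact h

lemma rnk_set_nonempty (P : ℕ → ℕ → Prop) (b : ℕ) :
    {j | ∀ b', b' < b → P b b' → rnk P b' ≠ j}.Nonempty := by
  refine ⟨((Finset.range b).image (rnk P)).sup id + 1, ?_⟩
  intro b' hb' _ hEq
  have : rnk P b' ≤ ((Finset.range b).image (rnk P)).sup id :=
    Finset.le_sup (f := id) (Finset.mem_image_of_mem _ (Finset.mem_range.2 hb'))
  omega

lemma rnk_ne (P : ℕ → ℕ → Prop) {b' b : ℕ} (h : b' < b) (hP : P b b') :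
    rnk P b' ≠ rnk P b := by
  have hmem := Nat.sInf_mem (rnk_set_nonempty P b)
  rw [show sInf {j | ∀ b', b' < b → P b b' → rnk P b' ≠ j} = rnk P b from (by rw [rnk])] at hmem
  exact hmem b' h hP

lemma rnk_le (P : ℕ → ℕ → Prop) (b : ℕ) (D : Finset ℕ)
    (hD : ∀ b' < b, P b b' → b' ∈ D) : rnk P b ≤ D.card := by
  have hcard : (D.image (rnk P)).card < (Finset.range (D.card + 1)).card := by
    simpa using Nat.lt_succ_of_le Finset.card_image_le
  obtain ⟨j, hj1, hj2⟩ : ∃ j ∈ Finset.range (D.card + 1), j ∉ D.image (rnk P) := by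
    by_contra h
    push_neg at h
    exact absurd (Finset.card_le_card h) (not_le.2 hcard)
  have hj : rnk P b ≤ j := by
    rw [rnk]
    exact Nat.sInf_le fun b' hb' hP hEq => hj2 (hEq ▸ Finset.mem_image_of_mem _ (hD b' hb' hP))
  rw [Finset.mem_range] at hj1
  omega

/-! ### Finite hypergraph Ramsey -/

def FR (r : ℕ) : ℕ → ℕ → ℕ
  | 0, _ => 0
  | (L+1), s => 1 + r ^ (2 ^ (s + 1)) * FR r L (s + 1)

lemma ramsey_build (r k : ℕ) (hr : 0 < r) (χ : Finset ℕ → Fin r) :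
    ∀ (L : ℕ) (seq X : Finset ℕ),
      (∀ s ∈ seq, ∀ x ∈ X, s < x) →
      (∀ σ ⊆ seq, σ.card = k → ∀ x ∈ X, ∀ y ∈ X, χ (insert x σ) = χ (insert y σ)) →
      FR r L seq.card ≤ X.card →
      ∃ s ⊆ X, s.card = L ∧
        ∀ σ, σ ⊆ seq ∪ s → σ.card = k → ∀ z ∈ s, ∀ z' ∈ s,
          (∀ y ∈ σ, y < z) → (∀ y ∈ σ, y < z') → χ (insert z σ) = χ (insert z' σ) := by
  intro L
  induction L with
  | zero =>
    intro seq X _ _ _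
    exact ⟨∅, Finset.empty_subset _, Finset.card_empty, fun σ _ _ z hz => absurd hz (Finset.notMem_empty z)⟩
  | succ L IH =>
    intro seq X horder hinv hcard
    classical
    have hXne : X.Nonempty := Finset.card_pos.1 (by simp [FR] at hcard; omega)
    set a := X.min' hXne with ha
    have haX : a ∈ X := X.min'_mem hXne
    have hanotseq : a ∉ seq := fun h => lt_irrefl a (horder a h a haX)
    -- fingerprint pigeonhole
    set Dom : Finset (Finset ℕ) := (insert a seq).powerset.filter (fun t => t.card = k) with hDom
    have hDomcard : Dom.card ≤ 2 ^ (seq.card + 1) := by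
      calc Dom.card ≤ (insert a seq).powerset.card := Finset.card_le_card (Finset.filter_subset _ _)
        _ = 2 ^ (insert a seq).card := Finset.card_powerset _
        _ ≤ 2 ^ (seq.card + 1) := Nat.pow_le_pow_right (by norm_num) (Finset.card_insert_le _ _)
    have : Nonempty (Fin r) := ⟨⟨0, hr⟩⟩
    set fp : ℕ → (Dom → Fin r) := fun x σ => χ (insert x σ.1) with hfp
    have hpig : ∃ y ∈ (Finset.univ : Finset (Dom → Fin r)),
        FR r L (seq.card + 1) ≤ ((X.erase a).filter (fun x => fp x = y)).card := by
      apply Finset.exists_le_card_fiber_of_mul_le_card_of_maps_to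
        (fun x _ => Finset.mem_univ (fp x)) Finset.univ_nonempty
      have h1 : (Finset.univ : Finset (Dom → Fin r)).card ≤ r ^ 2 ^ (seq.card + 1) := by
        rw [Finset.card_univ, Fintype.card_fun, Fintype.card_fin, Fintype.card_coe]
        exact Nat.pow_le_pow_right hr hDomcard
      have h2 : (X.erase a).card = X.card - 1 := Finset.card_erase_of_mem haX
      have h3 : 1 + r ^ 2 ^ (seq.card + 1) * FR r L (seq.card + 1) ≤ X.card := by
        simpa [FR] using hcard
      calc (Finset.univ : Finset (Dom → Fin r)).card * FR r L (seq.card + 1)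
          ≤ r ^ 2 ^ (seq.card + 1) * FR r L (seq.card + 1) := Nat.mul_le_mul_right _ h1
        _ ≤ (X.erase a).card := by omega
    obtain ⟨y, _, hy⟩ := hpig
    set X' : Finset ℕ := (X.erase a).filter (fun x => fp x = y) with hX'
    have hX'sub : X' ⊆ X.erase a := Finset.filter_subset _ _
    have hX'subX : X' ⊆ X := hX'sub.trans (Finset.erase_subset _ _)
    -- invariants for (insert a seq, X')
    have horder' : ∀ s ∈ insert a seq, ∀ x ∈ X', s < x := by
      intro s hs x hx
      rcases Finset.mem_insert.1 hs with rfl | hs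
      · have hxe := hX'sub hx
        have := X.min'_le x (Finset.mem_of_mem_erase hxe)
        have := Finset.ne_of_mem_erase hxe
        omega
      · exact horder s hs x (hX'subX hx)
    have hinv' : ∀ σ ⊆ insert a seq, σ.card = k → ∀ x ∈ X', ∀ y' ∈ X',
        χ (insert x σ) = χ (insert y' σ) := by
      intro σ hσ hσc x hx y' hy'
      have hσD : σ ∈ Dom := Finset.mem_filter.2 ⟨Finset.mem_powerset.2 hσ, hσc⟩
      have hfx : fp x = y := (Finset.mem_filter.1 hx).2
      have hfy : fp y' = y := (Finset.mem_filter.1 hy').2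
      have := congrFun (hfx.trans hfy.symm) ⟨σ, hσD⟩
      simpa [fp] using this
    have hcard' : FR r L (insert a seq).card ≤ X'.card := by
      rw [Finset.card_insert_of_notMem hanotseq]
      exact hy
    obtain ⟨s', hs'X', hs'card, hQ⟩ := IH (insert a seq) X' horder' hinv' hcard'
    have hanots' : a ∉ s' := fun h => (Finset.notMem_erase a X) (hX'sub (hs'X' h))
    refine ⟨insert a s', Finset.insert_subset haX (hs'X'.trans hX'subX), ?_, ?_⟩
    · rw [Finset.card_insert_of_notMem hanots', hs'card]
    · intro σ hσ hσc z hz z' hz' hσz hσz'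
      have hσsub : σ ⊆ insert a seq ∪ s' := by
        intro y' hy'
        have := hσ hy'
        rw [Finset.union_insert, ← Finset.insert_union] at this
        exact this
      -- helper: if all of σ < a then σ ⊆ seq
      have hseqa : (∀ y' ∈ σ, y' < a) → σ ⊆ seq := by
        intro hlt y' hy'
        rcases Finset.mem_union.1 (hσ hy') with h | h
        · exact h
        · rcases Finset.mem_insert.1 h with h | h
          · have := hlt y' hy'; omega
          · have : a ≤ y' := X.min'_le y' (hX'subX (hs'X' h))
            have := hlt y' hy'
            omega
      rcases Finset.mem_insert.1 hz with hza | hzs1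
      · rcases Finset.mem_insert.1 hz' with hza' | hzs2
        · rw [hza, hza']
        · subst hza
          exact hinv σ (hseqa hσz) hσc a haX z' (hX'subX (hs'X' hzs2))
      · rcases Finset.mem_insert.1 hz' with hza' | hzs2
        · subst hza'
          exact hinv σ (hseqa hσz') hσc z (hX'subX (hs'X' hzs1)) a haX
        · exact hQ σ hσsub hσc z hzs1 z' hzs2 hσz hσz'

lemma ramsey (r : ℕ) (hr : 0 < r) : ∀ (k n : ℕ), ∃ N, ∀ V : Finset ℕ, N ≤ V.card →
    ∀ χ : Finset ℕ → Fin r, ∃ (c : Fin r) (T : Finset ℕ), T ⊆ V ∧ T.card = n ∧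
      ∀ e ⊆ T, e.card = k → χ e = c := by
  have : Nonempty (Fin r) := ⟨⟨0, hr⟩⟩
  intro k
  induction k with
  | zero =>
    intro n
    refine ⟨n, fun V hV χ => ?_⟩
    obtain ⟨T, hT, hTc⟩ := Finset.exists_subset_card_eq hV
    exact ⟨χ ∅, T, hT, hTc, fun e _ hec => by rw [Finset.card_eq_zero.1 hec]⟩
  | succ k IHk =>
    intro n
    -- we need the case k = 0 (uniformity 1) separately: direct pigeonhole
    rcases Nat.eq_zero_or_pos k with rfl | hk
    · classical
      refine ⟨r * n, fun V hV χ => ?_⟩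
      have hpig : ∃ c ∈ (Finset.univ : Finset (Fin r)),
          n ≤ (V.filter (fun v => χ {v} = c)).card := by
        apply Finset.exists_le_card_fiber_of_mul_le_card_of_maps_to
          (fun x _ => Finset.mem_univ _) Finset.univ_nonempty
        simpa [Finset.card_univ] using hV
      obtain ⟨c, _, hc⟩ := hpig
      obtain ⟨T, hT, hTc⟩ := Finset.exists_subset_card_eq hc
      refine ⟨c, T, hT.trans (Finset.filter_subset _ _), hTc, fun e he hec => ?_⟩
      obtain ⟨v, rfl⟩ := Finset.card_eq_one.1 hec
      exact (Finset.mem_filter.1 (hT (he (Finset.mem_singleton_self v)))).2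
    · obtain ⟨N', hN'⟩ := IHk n
      refine ⟨FR r (N' + 1) 0, fun V hV χ => ?_⟩
      obtain ⟨s, hsV, hscard, hQ⟩ := ramsey_build r k hr χ (N' + 1) ∅ V
        (fun x hx => absurd hx (Finset.notMem_empty x))
        (fun σ hσ hσc => by
          rw [Finset.subset_empty.1 hσ, Finset.card_empty] at hσc; omega)
        (by simpa using hV)
      have hsne : s.Nonempty := Finset.card_pos.1 (by omega)
      set ω := s.max' hsne with hω
      have hωs : ω ∈ s := s.max'_mem hsne
      have hs0card : (s.erase ω).card = N' := by
        rw [Finset.card_erase_of_mem hωs, hscard]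
        omega
      obtain ⟨c, T, hTs, hTc, hmono⟩ := hN' (s.erase ω) (le_of_eq hs0card.symm)
        (fun σ => χ (insert ω σ))
      refine ⟨c, T, (hTs.trans (Finset.erase_subset _ _)).trans hsV, hTc, ?_⟩
      intro e he hec
      have hene : e.Nonempty := Finset.card_pos.1 (by omega)
      set z := e.max' hene with hz
      have hze : z ∈ e := e.max'_mem hene
      have hzs : z ∈ s := (Finset.erase_subset _ _) (hTs (he hze))
      have hσc : (e.erase z).card = k := by rw [Finset.card_erase_of_mem hze, hec]; omega
      have hσT : e.erase z ⊆ T := (Finset.erase_subset _ _).trans he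
      have hσs : e.erase z ⊆ ∅ ∪ s := by
        rw [Finset.empty_union]
        exact hσT.trans ((hTs.trans (Finset.erase_subset _ _)).trans (fun _ h => h))
      have h1 : χ (insert z (e.erase z)) = χ (insert ω (e.erase z)) := by
        apply hQ (e.erase z) hσs hσc z hzs ω hωs
        · intro y hy
          have := Finset.le_max' e y (Finset.mem_of_mem_erase hy)
          have := Finset.ne_of_mem_erase hy
          omega
        · intro y hy
          have hyT := hσT hy
          have hy' := hTs hyT
          have := Finset.le_max' s y (Finset.mem_of_mem_erase hy')
          have := Finset.ne_of_mem_erase hy'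
          omega
      rw [Finset.insert_erase hze] at h1
      rw [h1]
      exact hmono (e.erase z) hσT hσc

/-! ### Existence of an arrowing hypergraph -/

lemma exists_arrows (k l r n : ℕ) (hr : 0 < r) (hl : l < k) :
    ∃ G : Finset (Finset ℕ), IsUniform k G ∧ Arrows r G (hPath k l n) := by
  classical
  set a := k - l with ha
  have ha1 : 1 ≤ a := by omega
  set M := (n - l) / a with hM
  have hpath : hPath k l n = pathWithEdges k l M := rfl
  rcases Nat.eq_zero_or_pos M with hM0 | hM0
  · refine ⟨∅, fun e he => absurd he (Finset.notMem_empty e), ?_⟩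
    rw [hpath, hM0]
    exact arrows_empty_path hr ∅
  -- number of vertices of the path
  set Nv := (M - 1) * a + k with hNv
  have hNvn : Nv ≤ n := by
    have h1 : M * a ≤ n - l := Nat.div_mul_le_self _ _
    have h2 : (M - 1) * a + a = M * a := pred_mul_add hM0
    have h3 : l + a = k := by omega
    have h4 : 1 * a ≤ M * a := Nat.mul_le_mul_right a hM0
    omega
  obtain ⟨NR, hNR⟩ := ramsey r hr k n
  refine ⟨Finset.powersetCard k (Finset.range NR), ?_, ?_⟩
  · intro e he; exact (Finset.mem_powersetCard.1 he).2
  · intro χ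
    obtain ⟨c, T, hTV, hTc, hmono⟩ := hNR (Finset.range NR) (by simp) χ
    have hTn : Nv ≤ T.card := by omega
    set f : ℕ → ℕ := fun x => if h : x < n then T.orderEmbOfFin hTc ⟨x, h⟩ else x with hf
    have hfT : ∀ x < n, f x ∈ T := by
      intro x hx
      simp only [f, dif_pos hx]
      exact Finset.orderEmbOfFin_mem _ _ _
    have hfinj : ∀ x < n, ∀ y < n, f x = f y → x = y := by
      intro x hx y hy hxy
      simp only [f, dif_pos hx, dif_pos hy] at hxy
      exact congrArg Fin.val ((T.orderEmbOfFin hTc).injective hxy)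
    refine ⟨c, f, ?_, ?_⟩
    · rw [hpath, hVerts_path ha.symm ha1 (by omega) hM0]
      intro x hx y hy hxy
      simp only [Finset.coe_range, Set.mem_Iio] at hx hy
      exact hfinj x (by omega) y (by omega) hxy
    · intro e he
      rw [hpath, mem_pathWithEdges ha.symm] at he
      obtain ⟨i, hi, rfl⟩ := he
      have hpos : ∀ x ∈ pe k a i, x < n := by
        intro x hx
        rw [mem_pe] at hx
        have : i * a ≤ (M - 1) * a := Nat.mul_le_mul_right a (by omega)
        omega
      have hsubT : (pe k a i).image f ⊆ T := by
        intro y hy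
        obtain ⟨x, hx, rfl⟩ := Finset.mem_image.1 hy
        exact hfT x (hpos x hx)
      have hcard : ((pe k a i).image f).card = k := by
        rw [Finset.card_image_of_injOn, pe_card]
        intro x hx y hy hxy
        exact hfinj x (hpos x hx) y (hpos y hy) hxy
      refine Finset.mem_filter.2 ⟨Finset.mem_powersetCard.2 ⟨hsubT.trans (hTV.trans fun _ h => h), hcard⟩, ?_⟩
      exact hmono _ hsubT hcard

lemma sizeRamsey_le {k r : ℕ} {G H : Finset (Finset ℕ)} (h1 : IsUniform k G)
    (h2 : Arrows r G H) : sizeRamsey k r H ≤ G.card :=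
  Nat.sInf_le ⟨G, h1, h2, rfl⟩

lemma vertexRamsey_le {k r : ℕ} {G H : Finset (Finset ℕ)} (h1 : IsUniform k G)
    (h2 : Arrows r G H) : vertexRamsey k r H ≤ (hVerts G).card :=
  Nat.sInf_le ⟨G, h1, h2, rfl⟩

/-! ### helper: image of erase under injective-on map -/

lemma image_erase_of_injOn {f : ℕ → ℕ} {s : Finset ℕ} {N : ℕ} (hs : ∀ x ∈ s, x < N)
    (hinj : ∀ x < N, ∀ y < N, f x = f y → x = y) {j : ℕ} (hj : j ∈ s) :
    (s.erase j).image f = (s.image f).erase (f j) := by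
  ext z
  simp only [Finset.mem_image, Finset.mem_erase]
  constructor
  · rintro ⟨y, ⟨hyj, hys⟩, rfl⟩
    exact ⟨fun h => hyj (hinj y (hs y hys) j (hs j hj) h), y, hys, rfl⟩
  · rintro ⟨hz, y, hys, rfl⟩
    exact ⟨y, ⟨fun h => hz (by rw [h]), hys⟩, rfl⟩

lemma slack_arith (k a l S c0 D0 : ℕ) (hk2 : 2 ≤ k) (hS1 : 1 ≤ S) (ha1 : 1 ≤ a)
    (hka : l + a = k) (hl1 : 1 ≤ l) (hD0 : D0 = k*((S-1)*(k-1)+1)) (hc0 : c0 = 2*k^2*S) :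
    2*D0 + k + a ≤ c0 + l + 1 := by
  obtain ⟨s, rfl⟩ : ∃ s, S = s + 1 := ⟨S - 1, by omega⟩
  obtain ⟨k2, rfl⟩ : ∃ k2, k = k2 + 2 := ⟨k - 2, by omega⟩
  have h2 : s + 1 - 1 = s := by omega
  have h3 : k2 + 2 - 1 = k2 + 1 := by omega
  rw [h2, h3] at hD0
  subst hD0 hc0
  have h1 : a ≤ k2 + 1 := by omega
  nlinarith [Nat.zero_le (s*k2), Nat.zero_le (s*(k2*k2)), Nat.zero_le (k2*k2)]

/-! ### The main counting bound -/

lemma main_bound (k l a r n S V : ℕ)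
    (ha1 : 1 ≤ a) (hka : l + a = k) (hl1 : 1 ≤ l) (hr : 2 ≤ r)
    (hS : S = sizeRamsey (k-1) r (hPath (k-1) (l-1) ((l-1) + (k/a)*a)))
    (hV : V = vertexRamsey k r (hPath k l (n - 2*k^2*S)))
    (hS1 : 1 ≤ S) (hV1 : 1 ≤ V) (hn : 2*k^2*S ≤ n)
    (G : Finset (Finset ℕ)) (hG : IsUniform k G) (hGA : Arrows r G (hPath k l n)) :
    S * V ≤ k * G.card := by
  classical
  have hk2 : 2 ≤ k := by omega
  have hkl : k - l = a := by omega
  set B : Finset ℕ := (hVerts G).filter (fun v => hdeg G v < S) with hB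
  set A : Finset ℕ := (hVerts G).filter (fun v => ¬ hdeg G v < S) with hA
  have hclaim : V ≤ A.card := by
    by_contra hcon
    push_neg at hcon
    -- short-path parameters
    set m' := k / a with hm'
    have hm'1 : 1 ≤ m' := (Nat.one_le_div_iff (by omega)).2 (by omega)
    have hm'a : m' * a ≤ k := Nat.div_mul_le_self k a
    have hPqpath : hPath (k-1) (l-1) ((l-1) + m'*a) = pathWithEdges (k-1) (l-1) m' := by
      rw [hPath]
      congr 1
      have h1 : (k-1) - (l-1) = a := by omega
      rw [h1, Nat.add_sub_cancel_left, Nat.mul_div_cancel _ (by omega : 0 < a)]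
    clear_value m'
    set Pq := pathWithEdges (k-1) (l-1) m' with hPq
    set c0 := 2*k^2*S with hc0
    have hkc0 : k ≤ c0 := by
      have h1 : k * 1 ≤ (k*(2*k)) * S :=
        Nat.mul_le_mul (Nat.le_mul_of_pos_right k (by omega)) hS1
      have h2 : 2*k^2*S = k*(2*k)*S := by ring
      omega
    clear_value c0
    set n' := n - c0 with hn'
    clear_value n'
    set M'' := (n' - l)/a with hM''def
    have hpath'' : hPath k l n' = pathWithEdges k l M'' := by rw [hPath, hkl]
    have hM''d1 : M'' * a ≤ n' - l := Nat.div_mul_le_self _ _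
    clear_value M''
    have hM''1 : 1 ≤ M'' := by
      rcases Nat.eq_zero_or_pos M'' with h0 | h
      · exfalso
        have hz : V = 0 := by
          rw [hV, hpath'', h0, vertexRamsey_eq_zero (show 0 < r by omega)]
        omega
      · exact h
    -- the complete k-graph on A does not arrow the short path
    set K := Finset.powersetCard k A with hK
    have hKnotarrows : ¬ Arrows r K (hPath k l n') := by
      intro harr
      have h1 : vertexRamsey k r (hPath k l n') ≤ (hVerts K).card :=
        vertexRamsey_le (fun e he => (Finset.mem_powersetCard.1 he).2) harr
      have h2 : hVerts K ⊆ A := by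
        intro x hx
        obtain ⟨e, he, hxe⟩ := Finset.mem_biUnion.1 hx
        exact (Finset.mem_powersetCard.1 he).1 hxe
      have h3 := Finset.card_le_card h2
      rw [← hV] at h1
      omega
    obtain ⟨χA, hχA⟩ : ∃ χA : Finset ℕ → Fin r,
        ∀ c, ¬ IsCopy (hPath k l n') (K.filter fun e => χA e = c) := by
      unfold Arrows at hKnotarrows
      push_neg at hKnotarrows
      exact hKnotarrows
    -- links of low-degree vertices have bad colorings
    set lk : ℕ → Finset (Finset ℕ) :=
      fun b => (G.filter fun e => b ∈ e).image (fun e => e.erase b) with hlk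
    have hbad : ∀ b, ∃ χs : Finset ℕ → Fin r, b ∈ B →
        ∀ c, ¬ IsCopy Pq ((lk b).filter fun e => χs e = c) := by
      intro b
      by_cases hbB : b ∈ B
      · have hnot : ¬ Arrows r (lk b) Pq := by
          intro harr
          have h1 : S ≤ (lk b).card := by
            rw [hS, hPqpath]
            refine sizeRamsey_le ?_ harr
            intro e he
            obtain ⟨e', he', rfl⟩ := Finset.mem_image.1 he
            rw [Finset.card_erase_of_mem (Finset.mem_filter.1 he').2,
              hG e' (Finset.mem_filter.1 he').1]
          have h2 : (lk b).card ≤ hdeg G b := Finset.card_image_le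
          have h3 : hdeg G b < S := (Finset.mem_filter.1 hbB).2
          omega
        unfold Arrows at hnot
        push_neg at hnot
        obtain ⟨χs, hχs⟩ := hnot
        exact ⟨χs, fun _ => hχs⟩
      · exact ⟨fun _ => ⟨0, by omega⟩, fun h => absurd h hbB⟩
    choose χb hχb using hbad
    -- rank: greedy proper coloring of the co-occurrence graph on B
    set P : ℕ → ℕ → Prop := fun u v => v ∈ B ∧ v ≠ u ∧ ∃ e ∈ G, u ∈ e ∧ v ∈ e with hP
    have hrnk_ne : ∀ x ∈ B, ∀ y ∈ B, x ≠ y → (∃ e ∈ G, x ∈ e ∧ y ∈ e) →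
        rnk P x ≠ rnk P y := by
      rintro x hx y hy hxy ⟨e, he, hxe, hye⟩
      rcases Nat.lt_or_ge x y with h | h
      · exact rnk_ne P h ⟨hx, hxy, e, he, hye, hxe⟩
      · have h' : y < x := by omega
        exact (rnk_ne P h' ⟨hy, hxy.symm, e, he, hxe, hye⟩).symm
    have hrnk_le : ∀ b ∈ B, rnk P b ≤ (S-1)*(k-1) := by
      intro b hbB
      have h1 : rnk P b ≤ ((G.filter fun e => b ∈ e).biUnion (fun e => e.erase b)).card := by
        apply rnk_le
        rintro b' _ ⟨_, hne, e, he, hbe, hb'e⟩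
        exact Finset.mem_biUnion.2 ⟨e, Finset.mem_filter.2 ⟨he, hbe⟩,
          Finset.mem_erase.2 ⟨hne, hb'e⟩⟩
      have h2 : ((G.filter fun e => b ∈ e).biUnion (fun e => e.erase b)).card ≤
          hdeg G b * (k-1) := by
        calc ((G.filter fun e => b ∈ e).biUnion (fun e => e.erase b)).card
            ≤ ∑ e ∈ G.filter (fun e => b ∈ e), (e.erase b).card := Finset.card_biUnion_le
          _ ≤ ∑ _e ∈ G.filter (fun e => b ∈ e), (k-1) := Finset.sum_le_sum (fun e he => by
              rw [Finset.card_erase_of_mem (Finset.mem_filter.1 he).2,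
                hG e (Finset.mem_filter.1 he).1])
          _ = hdeg G b * (k-1) := by rw [Finset.sum_const, smul_eq_mul]; rfl
      have h3 : hdeg G b < S := (Finset.mem_filter.1 hbB).2
      have h4 : hdeg G b * (k-1) ≤ (S-1)*(k-1) := Nat.mul_le_mul_right _ (by omega)
      omega
    -- minimal-rank selector
    set bm : Finset ℕ → ℕ := fun e =>
      if h : (e ∩ B).Nonempty then (Finset.exists_min_image (e ∩ B) (rnk P) h).choose
      else 0 with hbm
    have hbm_spec : ∀ e : Finset ℕ, (e ∩ B).Nonempty →
        bm e ∈ e ∩ B ∧ ∀ x ∈ e ∩ B, rnk P (bm e) ≤ rnk P x := by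
      intro e h
      simp only [hbm, dif_pos h]
      obtain ⟨h1, h2⟩ := (Finset.exists_min_image (e ∩ B) (rnk P) h).choose_spec
      exact ⟨h1, h2⟩
    -- the global coloring
    set χ : Finset ℕ → Fin r := fun e =>
      if (e ∈ G ∧ (e ∩ B).Nonempty) then χb (bm e) (e.erase (bm e)) else χA e with hχ
    obtain ⟨c, f, hfinj, hfe⟩ := hGA χ
    -- long-path parameters
    set M := (n - l)/a with hMdef
    have hpath : hPath k l n = pathWithEdges k l M := by rw [hPath, hkl]
    have hM1 : 1 ≤ M := (Nat.one_le_div_iff (by omega)).2 (by omega)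
    have hMd1 : M * a ≤ n - l := Nat.div_mul_le_self _ _
    have hMd2 : n - l < M * a + a := by
      have hd : a * M + (n - l) % a = n - l := by rw [hMdef]; exact Nat.div_add_mod _ _
      have hmm : (n - l) % a < a := Nat.mod_lt _ (by omega)
      have hcomm : a * M = M * a := Nat.mul_comm _ _
      omega
    clear_value M
    have hMa2 : (M-1)*a + a = M*a := pred_mul_add hM1
    have hM''a2 : (M''-1)*a + a = M''*a := pred_mul_add hM''1
    have haM'' : a ≤ M'' * a := by
      calc a = 1 * a := (one_mul a).symm
        _ ≤ M'' * a := Nat.mul_le_mul_right a hM''1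
    rw [hpath] at hfinj hfe
    rw [hVerts_path hkl ha1 (by omega) hM1] at hfinj
    set N := (M-1)*a + k with hN
    clear_value N
    have hfinj' : ∀ x < N, ∀ y < N, f x = f y → x = y := by
      intro x hx y hy h
      exact hfinj (by simp only [Finset.coe_range, Set.mem_Iio]; exact hx)
        (by simp only [Finset.coe_range, Set.mem_Iio]; exact hy) h
    have hedge : ∀ i < M, (pe k a i).image f ∈ G ∧ χ ((pe k a i).image f) = c := by
      intro i hi
      have h := hfe (pe k a i) ((mem_pathWithEdges hkl).2 ⟨i, hi, rfl⟩)
      exact ⟨(Finset.mem_filter.1 h).1, (Finset.mem_filter.1 h).2⟩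
    have hpeN : ∀ i < M, ∀ x ∈ pe k a i, x < N := by
      intro i hi x hx
      rw [mem_pe] at hx
      have h1 : i * a ≤ (M-1) * a := Nat.mul_le_mul_right a (by omega)
      omega
    -- THE CONFINEMENT LEMMA
    have confine : ∀ ρ : ℕ, ∀ j, j < N → f j ∈ B → rnk P (f j) = ρ →
        ¬(k*(ρ+1) ≤ j ∧ j + k*(ρ+1) < N) := by
      intro ρ
      induction ρ using Nat.strong_induction_on with
      | _ ρ IH =>
        rintro j hjN hfjB hρ ⟨hj1, hj2⟩
        have hk1 : k ≤ k*(ρ+1) := Nat.le_mul_of_pos_right k (by omega)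
        have hjk : k ≤ j := le_trans hk1 hj1
        have hjkN : j + k < N := by omega
        obtain ⟨i0, hd1, hd2⟩ : ∃ i0, i0 * a ≤ j + a - k ∧ j + a - k < i0 * a + a := by
          refine ⟨(j + a - k)/a, Nat.div_mul_le_self _ _, ?_⟩
          have hd := Nat.div_add_mod (j + a - k) a
          have hmm : (j + a - k) % a < a := Nat.mod_lt _ (by omega)
          have hcomm : a * ((j + a - k)/a) = ((j + a - k)/a) * a := Nat.mul_comm _ _
          omega
        have hm'a2 : (m'-1)*a + a = m'*a := pred_mul_add hm'1
        have hblock : ∀ t < m', (i0+t)*a ≤ j ∧ j < (i0+t)*a + k := by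
          intro t ht
          have e5 : t*a ≤ (m'-1)*a := Nat.mul_le_mul_right a (by omega)
          have e6 : (i0+t)*a = i0*a + t*a := Nat.add_mul _ _ _
          omega
        have hblockM : i0 + m' ≤ M := by
          have h1 := (hblock (m'-1) (by omega)).1
          have e6 : (i0+(m'-1))*a = i0*a + (m'-1)*a := Nat.add_mul _ _ _
          have h3 : (i0 + (m'-1)) * a < (M-1) * a := by omega
          have h4 : i0 + (m'-1) < M - 1 := by
            by_contra hcon4
            exact absurd (Nat.mul_le_mul_right a (by omega : M - 1 ≤ i0 + (m'-1)))
              (by omega)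
          omega
        by_cases hcase : ∃ t < m', ∃ j', (i0+t)*a ≤ j' ∧ j' < (i0+t)*a + k ∧
            f j' ∈ B ∧ rnk P (f j') < ρ
        · obtain ⟨t, ht, j', hj'1, hj'2, hj'B, hj'ρ⟩ := hcase
          have hband := hblock t ht
          have hj'N : j' < N := hpeN (i0+t) (by omega) j' (mem_pe.2 ⟨hj'1, hj'2⟩)
          have hIH := IH (rnk P (f j')) hj'ρ j' hj'N hj'B rfl
          have hkρ : k*(rnk P (f j') + 1) ≤ k*ρ := Nat.mul_le_mul_left k (by omega)
          have hkρ2 : k*(ρ+1) = k*ρ + k := by ring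
          rcases not_and_or.1 hIH with h | h
          · have h' := not_le.1 h
            omega
          · have h' := not_lt.1 h
            omega
        · push_neg at hcase
          have hkey : ∀ t < m', ((pe k a (i0+t)).image f).erase (f j) ∈
              (lk (f j)).filter (fun e' => χb (f j) e' = c) := by
            intro t ht
            have hiM : i0 + t < M := by omega
            obtain ⟨heG, heχ⟩ := hedge (i0+t) hiM
            have hjpe : j ∈ pe k a (i0+t) := mem_pe.2 (hblock t ht)
            have hbmem : f j ∈ (pe k a (i0+t)).image f := Finset.mem_image_of_mem f hjpe
            have hne : (((pe k a (i0+t)).image f) ∩ B).Nonempty :=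
              ⟨f j, Finset.mem_inter.2 ⟨hbmem, hfjB⟩⟩
            have hbmb : bm ((pe k a (i0+t)).image f) = f j := by
              obtain ⟨hmem, hmin⟩ := hbm_spec _ hne
              by_contra hne'
              obtain ⟨hbm_e, hbm_B⟩ := Finset.mem_inter.1 hmem
              obtain ⟨j'', hj''pe, hj''⟩ := Finset.mem_image.1 hbm_e
              have hpe'' := mem_pe.1 hj''pe
              have h1 : ρ ≤ rnk P (f j'') :=
                hcase t ht j'' hpe''.1 hpe''.2 (by rw [hj'']; exact hbm_B)
              have h2 : rnk P (bm ((pe k a (i0+t)).image f)) ≤ rnk P (f j) :=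
                hmin (f j) (Finset.mem_inter.2 ⟨hbmem, hfjB⟩)
              have h3 : rnk P (bm ((pe k a (i0+t)).image f)) ≠ rnk P (f j) :=
                hrnk_ne _ hbm_B _ hfjB hne' ⟨_, heG, hbm_e, hbmem⟩
              rw [hj''] at h1
              omega
            have hχe : χ ((pe k a (i0+t)).image f) =
                χb (f j) (((pe k a (i0+t)).image f).erase (f j)) := by
              simp only [hχ]
              rw [if_pos (⟨heG, hne⟩ : _ ∧ _), hbmb]
            refine Finset.mem_filter.2 ⟨?_, ?_⟩
            · exact Finset.mem_image.2 ⟨_, Finset.mem_filter.2 ⟨heG, hbmem⟩, rfl⟩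
            · rw [← hχe]; exact heχ
          set skp : ℕ → ℕ := fun x => if i0*a + x < j then i0*a + x else i0*a + x + 1
            with hskp
          have hNq2 : hVerts (pathWithEdges (k-1) (l-1) m') =
              Finset.range ((m'-1)*a + (k-1)) :=
            hVerts_path (by omega) ha1 (by omega) hm'1
          have hskpN : ∀ x, x < (m'-1)*a + (k-1) → skp x < N := by
            intro x hx
            have h2 := (hblock (m'-1) (by omega)).1
            have e6 : (i0+(m'-1))*a = i0*a + (m'-1)*a := Nat.add_mul _ _ _
            simp only [hskp]
            split <;> omega
          have hskpinj : ∀ x y, skp x = skp y → x = y := by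
            intro x y h
            simp only [hskp] at h
            split_ifs at h <;> omega
          have hedgeq : ∀ i < m', (pe (k-1) a i).image (fun x => f (skp x)) =
              ((pe k a (i0+i)).image f).erase (f j) := by
            intro i hi
            have hjpe : j ∈ pe k a (i0+i) := mem_pe.2 (hblock i hi)
            have h1 : (pe (k-1) a i).image skp = (pe k a (i0+i)).erase j := by
              ext x
              simp only [Finset.mem_image, mem_pe, Finset.mem_erase]
              have e6 : (i0+i)*a = i0*a + i*a := Nat.add_mul _ _ _
              have hbi := hblock i hi
              constructor
              · rintro ⟨y, ⟨hy1, hy2⟩, rfl⟩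
                simp only [hskp]
                split <;> omega
              · rintro ⟨hxj, hx1, hx2⟩
                rcases Nat.lt_or_ge x j with hlt | hge
                · refine ⟨x - i0*a, ⟨by omega, by omega⟩, ?_⟩
                  simp only [hskp]
                  rw [if_pos (by omega)]
                  omega
                · refine ⟨x - i0*a - 1, ⟨by omega, by omega⟩, ?_⟩
                  simp only [hskp]
                  rw [if_neg (by omega)]
                  omega
            calc (pe (k-1) a i).image (fun x => f (skp x))
                = ((pe (k-1) a i).image skp).image f := by
                  rw [Finset.image_image]; rfl
              _ = ((pe k a (i0+i)).erase j).image f := by rw [h1]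
              _ = ((pe k a (i0+i)).image f).erase (f j) :=
                  image_erase_of_injOn (hpeN (i0+i) (by omega)) hfinj' hjpe
          have hcopy : IsCopy Pq ((lk (f j)).filter fun e' => χb (f j) e' = c) := by
            refine ⟨fun x => f (skp x), ?_, ?_⟩
            · rw [hPq, hNq2]
              intro x hx y hy hxy
              simp only [Finset.coe_range, Set.mem_Iio] at hx hy
              exact hskpinj x y (hfinj' _ (hskpN x hx) _ (hskpN y hy) hxy)
            · intro e he
              rw [hPq, mem_pathWithEdges (show (k-1)-(l-1) = a by omega)] at he
              obtain ⟨i, hi, rfl⟩ := he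
              rw [hedgeq i hi]
              exact hkey i hi
          exact hχb (f j) hfjB c hcopy
    -- trimming: a monochromatic B-free sub-path inside A
    set D0 := k * ((S-1)*(k-1) + 1) with hD0
    have hconf' : ∀ j, j < N → f j ∈ B → j < D0 ∨ N ≤ j + D0 := by
      intro j hj hfB
      by_contra h
      push_neg at h
      obtain ⟨h1, h2⟩ := h
      have hle : rnk P (f j) ≤ (S-1)*(k-1) := hrnk_le _ hfB
      have hD0le : k * (rnk P (f j) + 1) ≤ D0 := Nat.mul_le_mul_left k (by omega)
      exact confine (rnk P (f j)) j hj hfB rfl ⟨by omega, by omega⟩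
    clear_value D0
    have hslack : 2*D0 + k + a ≤ c0 + l + 1 :=
      slack_arith k a l S c0 D0 hk2 hS1 ha1 hka hl1 hD0 hc0
    obtain ⟨i1, hia2, hia1⟩ : ∃ i1, D0 < i1 * a ∧ i1 * a ≤ D0 + a := by
      refine ⟨D0/a + 1, ?_, ?_⟩
      · have hd := Nat.div_add_mod D0 a
        have hmm : D0 % a < a := Nat.mod_lt _ (by omega)
        have hcomm : a * (D0/a) = (D0/a) * a := Nat.mul_comm _ _
        have hexp : (D0/a + 1)*a = (D0/a)*a + a := by rw [Nat.add_mul, one_mul]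
        omega
      · have hd := Nat.div_mul_le_self D0 a
        have hexp : (D0/a + 1)*a = (D0/a)*a + a := by rw [Nat.add_mul, one_mul]
        omega
    have e1 : (i1 + (M''-1))*a = i1*a + (M''-1)*a := Nat.add_mul _ _ _
    have hnl : l + c0 ≤ n := by omega
    have hupper : (i1 + (M''-1))*a + (k-1) + D0 < N := by omega
    have hi1M : i1 + M'' ≤ M := by
      have h1 : (i1 + (M''-1))*a < M*a := by omega
      have h2 : i1 + (M''-1) < M := by
        by_contra hcc
        exact absurd (Nat.mul_le_mul_right a (by omega : M ≤ i1 + (M''-1))) (by omega)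
      omega
    have hcopy2 : IsCopy (hPath k l n') (K.filter fun e => χA e = c) := by
      refine ⟨fun x => f (i1*a + x), ?_, ?_⟩
      · rw [hpath'', hVerts_path hkl ha1 (by omega) hM''1]
        intro x hx y hy hxy
        simp only [Finset.coe_range, Set.mem_Iio] at hx hy
        have hxN : i1*a + x < N := by omega
        have hyN : i1*a + y < N := by omega
        have := hfinj' _ hxN _ hyN hxy
        omega
      · intro e he
        rw [hpath'', mem_pathWithEdges hkl] at he
        obtain ⟨i, hi, rfl⟩ := he
        have hiM : i1 + i < M := by omega
        obtain ⟨heG, heχ⟩ := hedge (i1+i) hiM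
        have e2 : (i1+i)*a = i1*a + i*a := Nat.add_mul _ _ _
        have e3 : i*a ≤ (M''-1)*a := Nat.mul_le_mul_right a (by omega)
        have him : (pe k a i).image (fun x => f (i1*a + x)) = (pe k a (i1+i)).image f := by
          have h1 : (pe k a i).image (fun x => i1*a + x) = pe k a (i1+i) := by
            ext x
            simp only [Finset.mem_image, mem_pe]
            constructor
            · rintro ⟨y, ⟨hy1, hy2⟩, rfl⟩
              omega
            · rintro ⟨h1', h2'⟩
              exact ⟨x - i1*a, ⟨by omega, by omega⟩, by omega⟩
          calc (pe k a i).image (fun x => f (i1*a + x))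
              = ((pe k a i).image (fun x => i1*a + x)).image f := by
                rw [Finset.image_image]; rfl
            _ = (pe k a (i1+i)).image f := by rw [h1]
        rw [him]
        have hsubA : (pe k a (i1+i)).image f ⊆ A := by
          intro z hz
          obtain ⟨p, hp, rfl⟩ := Finset.mem_image.1 hz
          have hpb := mem_pe.1 hp
          have hpN : p < N := hpeN (i1+i) hiM p hp
          have hfv : f p ∈ hVerts G :=
            Finset.mem_biUnion.2 ⟨_, heG, Finset.mem_image_of_mem f hp⟩
          by_cases hfB : f p ∈ B
          · rcases hconf' p hpN hfB with h | h
            · omega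
            · omega
          · exact Finset.mem_filter.2 ⟨hfv, fun hlt => hfB (Finset.mem_filter.2 ⟨hfv, hlt⟩)⟩
        have hBempty : ¬ (((pe k a (i1+i)).image f) ∩ B).Nonempty := by
          rintro ⟨x, hx⟩
          obtain ⟨hx1, hx2⟩ := Finset.mem_inter.1 hx
          exact (Finset.mem_filter.1 (hsubA hx1)).2 (Finset.mem_filter.1 hx2).2
        refine Finset.mem_filter.2 ⟨Finset.mem_powersetCard.2 ⟨hsubA, hG _ heG⟩, ?_⟩
        have hcc : χ ((pe k a (i1+i)).image f) = χA ((pe k a (i1+i)).image f) := by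
          simp only [hχ]
          exact if_neg (fun hcontra => hBempty hcontra.2)
        rw [← hcc]
        exact heχ
    exact hχA c hcopy2
  calc S * V ≤ S * A.card := Nat.mul_le_mul_left S hclaim
    _ = ∑ _v ∈ A, S := by rw [Finset.sum_const, smul_eq_mul, mul_comm]
    _ ≤ ∑ v ∈ A, hdeg G v := Finset.sum_le_sum (fun v hv => not_lt.1 (Finset.mem_filter.1 hv).2)
    _ ≤ ∑ v ∈ hVerts G, hdeg G v :=
        Finset.sum_le_sum_of_subset (Finset.filter_subset _ _)
    _ = k * G.card := sum_hdeg hG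


theorem stmt0 (k r l : ℕ) (hk : 2 ≤ k) (hr : 2 ≤ r) (hl1 : 1 ≤ l) (hl2 : l ≤ k - 1)
    (q c0 : ℕ) (hq : q = (l - 1) + (k / (k - l)) * (k - l))
    (hc0 : c0 = 2 * k ^ 2 * sizeRamsey (k - 1) r (hPath (k - 1) (l - 1) q)) :
    ∀ n : ℕ, c0 ≤ n →
      ((sizeRamsey k r (hPath k l n) : ℝ) ≥
        (1 / k) * sizeRamsey (k - 1) r (hPath (k - 1) (l - 1) q) *
          vertexRamsey k r (hPath k l (n - c0))) ∧
      (l = k - 1 →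
        (sizeRamsey k r (hPath k l n) : ℝ) ≥
          (1 / k) * sizeRamsey (k - 1) r (hPath (k - 1) (k - 2) (2 * k - 2)) *
            vertexRamsey k r (hPath k l (n - c0))) := by
  intro n hn
  set S := sizeRamsey (k - 1) r (hPath (k - 1) (l - 1) q) with hS
  set V := vertexRamsey k r (hPath k l (n - c0)) with hV
  have hmain : (sizeRamsey k r (hPath k l n) : ℝ) ≥ (1 / k) * S * V := by
    rcases Nat.eq_zero_or_pos S with hS0 | hS1
    · rw [hS0]
      simp
    rcases Nat.eq_zero_or_pos V with hV0 | hV1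
    · rw [hV0]
      simp
    obtain ⟨G0, hG0u, hG0a⟩ := exists_arrows k l r n (by omega) (by omega)
    have hne : {m | ∃ G : Finset (Finset ℕ), IsUniform k G ∧ Arrows r G (hPath k l n) ∧
        G.card = m}.Nonempty := ⟨G0.card, G0, hG0u, hG0a, rfl⟩
    have hmem : sizeRamsey k r (hPath k l n) ∈ {m | ∃ G : Finset (Finset ℕ),
        IsUniform k G ∧ Arrows r G (hPath k l n) ∧ G.card = m} := Nat.sInf_mem hne
    obtain ⟨G, hGu, hGa, hGc⟩ := hmem
    have hq' : S = sizeRamsey (k-1) r (hPath (k-1) (l-1) ((l-1) + (k/(k-l))*(k-l))) := by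
      rw [hS, ← hq]
    have hV' : V = vertexRamsey k r (hPath k l (n - 2*k^2*S)) := by
      rw [hV, ← hc0]
    have hb : S * V ≤ k * G.card :=
      main_bound k l (k-l) r n S V (by omega) (by omega) hl1 hr hq' hV' hS1 hV1
        (by rw [← hc0]; exact hn) G hGu hGa
    rw [hGc] at hb
    have hreal : (S : ℝ) * V ≤ k * (sizeRamsey k r (hPath k l n) : ℝ) := by
      exact_mod_cast hb
    rw [ge_iff_le]
    have hk0 : (0:ℝ) < k := by
      have : (2:ℝ) ≤ k := by exact_mod_cast hk
      linarith
    rw [show (1:ℝ)/k * S * V = (S*V)/k by ring, div_le_iff₀ hk0]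
    linarith [hreal]
  refine ⟨hmain, fun hlk => ?_⟩
  have h1 : k - 2 = l - 1 := by omega
  have h2 : 2*k - 2 = q := by
    have h3 : k - l = 1 := by omega
    rw [hq, h3, Nat.div_one, mul_one]
    omega
  rw [h1, h2, ← hS]
  exact hmain
end

section
/- For all r ≥ 2, r²/2 < R̂_r(P_4) ≤ (r+1)(2r+1), where P_4 is the graph path on 4 vertices. -/
open Finset

/-!
Upper bound: `K_{2r+2}` has `(r+1)(2r+1) > r(2r+2)` edges, so some colour class has more edges
than `K_{2r+2}` has vertices, and such a graph contains `P₄`: after stripping vertices of degree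
at most one, some vertex has degree at least three and all its neighbours have degree at least two.

Lower bound: every graph with `m ≤ r²/2` edges has an `r`-colouring without monochromatic `P₄`.
By Vizing's bound, a graph whose non-isolated vertices number `n` has a dominating set `D` with
`2m ≤ (n - |D|)(n - |D| + 2)`. Joining each vertex outside `D` to a neighbour in `D` gives a star
forest with `n - |D|` edges; if `r² < 2m ≤ (r+1)²` this leaves at most `r²/2` edges, which are
coloured with `r` colours by induction, and the star forest gets the last colour.
Vizing's bound itself follows by induction on `m`: delete the edges at one of two adjacent
vertices with equal closed neighbourhoods if there are such, and otherwise the edges meeting the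
closed neighbourhood of a vertex of maximum degree.
-/

open Finset

notation "P₄" => hPath 2 1 4

namespace SizeRamseyP4

variable {E E' F : Finset (Finset ℕ)} {S C D e : Finset ℕ} {u v w x s : ℕ}

def nbrs (E : Finset (Finset ℕ)) (v : ℕ) : Finset ℕ :=
  {w ∈ hVerts E | w ≠ v ∧ {v, w} ∈ E}

def closedNbhd (E : Finset (Finset ℕ)) (C : Finset ℕ) : Finset ℕ := C ∪ C.biUnion (nbrs E)

lemma mem_hVerts : x ∈ hVerts E ↔ ∃ e ∈ E, x ∈ e := by simp [hVerts]

lemma hVerts_mono (h : E' ⊆ E) : hVerts E' ⊆ hVerts E :=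
  biUnion_subset_biUnion_of_subset_left _ h

lemma mem_nbrs : w ∈ nbrs E v ↔ w ≠ v ∧ {v, w} ∈ E := by
  simp only [nbrs, mem_filter, and_iff_right_iff_imp, and_imp]
  exact fun _ h => mem_hVerts.2 ⟨_, h, by simp⟩

lemma mem_nbrs_comm : w ∈ nbrs E v ↔ v ∈ nbrs E w := by
  simp only [mem_nbrs, pair_comm v w, ne_comm]

lemma nbrs_subset_hVerts : nbrs E v ⊆ hVerts E := filter_subset _ _

lemma not_mem_nbrs_self : v ∉ nbrs E v := fun h => (mem_nbrs.1 h).1 rfl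

lemma mem_hVerts_of_mem_nbrs (h : w ∈ nbrs E v) : v ∈ hVerts E :=
  nbrs_subset_hVerts (mem_nbrs_comm.1 h)

lemma nbrs_mono (h : E' ⊆ E) : nbrs E' v ⊆ nbrs E v := fun _ hw =>
  mem_nbrs.2 ⟨(mem_nbrs.1 hw).1, h (mem_nbrs.1 hw).2⟩

lemma closedNbhd_singleton : closedNbhd E {v} = insert v (nbrs E v) := by
  rw [closedNbhd, singleton_biUnion, ← insert_eq]

lemma closedNbhd_subset_hVerts (hC : C ⊆ hVerts E) : closedNbhd E C ⊆ hVerts E :=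
  union_subset hC (biUnion_subset.2 fun _ _ => nbrs_subset_hVerts)

lemma pair_eq_pair_iff {a b c d : ℕ} :
    ({a, b} : Finset ℕ) = {c, d} ↔ a = c ∧ b = d ∨ a = d ∧ b = c := by
  rw [← coe_inj, coe_pair, coe_pair, Set.pair_eq_pair_iff]

lemma exists_eq_pair (he : e.card = 2) (hv : v ∈ e) : ∃ w, w ≠ v ∧ e = {v, w} := by
  obtain ⟨a, b, hab, rfl⟩ := card_eq_two.1 he
  rcases mem_insert.1 hv with rfl | hv
  · exact ⟨b, hab.symm, rfl⟩
  · rw [mem_singleton.1 hv]; exact ⟨a, hab, pair_comm _ _⟩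

lemma nbrs_nonempty (h2 : IsUniform 2 E) (hv : v ∈ hVerts E) : (nbrs E v).Nonempty := by
  obtain ⟨e, he, hve⟩ := mem_hVerts.1 hv
  obtain ⟨w, hwv, rfl⟩ := exists_eq_pair (h2 e he) hve
  exact ⟨w, mem_nbrs.2 ⟨hwv, he⟩⟩

lemma IsUniform.mono {k : ℕ} (h : IsUniform k E) (h' : E' ⊆ E) : IsUniform k E' :=
  fun e he => h e (h' he)

lemma exists_forall_card_nbrs_le (hE : (hVerts E).Nonempty) :
    ∃ v ∈ hVerts E, ∀ x, #(nbrs E x) ≤ #(nbrs E v) := by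
  obtain ⟨v, hv, hmax⟩ := exists_max_image (hVerts E) (fun x => #(nbrs E x)) hE
  refine ⟨v, hv, fun x => ?_⟩
  by_cases hx : x ∈ hVerts E
  · exact hmax x hx
  · rw [card_eq_zero.2 (eq_empty_of_forall_notMem fun w hw => hx (mem_hVerts_of_mem_nbrs hw))]
    exact Nat.zero_le _

lemma card_filter_mem_eq (h2 : IsUniform 2 E) (P : Finset ℕ → Prop) [DecidablePred P] :
    #{e ∈ E | v ∈ e ∧ P e} = #{w ∈ nbrs E v | P {v, w}} := by
  symm
  refine card_bij (fun w _ => {v, w}) ?_ ?_ ?_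
  · intro w hw
    simp only [mem_filter, mem_nbrs] at hw ⊢
    exact ⟨hw.1.2, by simp, hw.2⟩
  · intro w hw w' _ h
    rcases pair_eq_pair_iff.1 h with ⟨-, h⟩ | ⟨-, h⟩
    exacts [h, absurd h (mem_nbrs.1 (mem_filter.1 hw).1).1]
  · intro e he
    obtain ⟨heE, hv, hP⟩ := mem_filter.1 he
    obtain ⟨w, hwv, rfl⟩ := exists_eq_pair (h2 e heE) hv
    exact ⟨w, mem_filter.2 ⟨mem_nbrs.2 ⟨hwv, heE⟩, hP⟩, rfl⟩

lemma card_filter_mem_eq_card_nbrs (h2 : IsUniform 2 E) : #{e ∈ E | v ∈ e} = #(nbrs E v) := by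
  simpa using card_filter_mem_eq (v := v) h2 (fun _ => True)

lemma card_filter_not_mem_add_card_nbrs (h2 : IsUniform 2 E) :
    #{e ∈ E | w ∉ e} + #(nbrs E w) = #E := by
  rw [← card_filter_mem_eq_card_nbrs h2, add_comm]
  exact card_filter_add_card_filter_not _

lemma sum_card_filter_mem (S : Finset ℕ) (E : Finset (Finset ℕ)) :
    ∑ x ∈ S, #{e ∈ E | x ∈ e} = ∑ e ∈ E, #(S ∩ e) := by
  simp_rw [← filter_mem_eq_inter, card_eq_sum_ones, sum_filter]
  exact sum_comm

lemma sum_card_nbrs (h2 : IsUniform 2 E) (hS : hVerts E ⊆ S) :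
    ∑ x ∈ S, #(nbrs E x) = 2 * #E := by
  simp_rw [← card_filter_mem_eq_card_nbrs h2, sum_card_filter_mem]
  rw [sum_congr rfl fun e he => by
    rw [inter_eq_right.2 fun x hx => hS (mem_hVerts.2 ⟨e, he, hx⟩), h2 e he],
    sum_const, smul_eq_mul, mul_comm]

lemma two_mul_indicator_not_disjoint (he : e.card = 2) (S : Finset ℕ) :
    (if Disjoint e S then 0 else 2) = #(S ∩ e) + if e ⊆ S then 0 else #(S ∩ e) := by
  obtain ⟨a, b, hab, rfl⟩ := card_eq_two.1 he
  by_cases ha : a ∈ S <;> by_cases hb : b ∈ S <;>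
    simp [ha, hb, hab, insert_subset_iff, inter_insert_of_mem, inter_insert_of_notMem,
      inter_singleton_of_mem, inter_singleton_of_notMem]

lemma sum_card_nbrs_sdiff (h2 : IsUniform 2 E) (S : Finset ℕ) :
    ∑ x ∈ S, #(nbrs E x \ S) = ∑ e ∈ E, if e ⊆ S then 0 else #(S ∩ e) := by
  have h : ∀ x ∈ S, #(nbrs E x \ S) = #{e ∈ {e ∈ E | ¬e ⊆ S} | x ∈ e} := by
    intro x hx
    rw [filter_filter, filter_congr fun _ _ => and_comm, card_filter_mem_eq h2, sdiff_eq_filter]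
    simp [insert_subset_iff, hx]
  rw [sum_congr rfl h, sum_card_filter_mem, sum_filter]
  exact sum_congr rfl fun e _ => by split_ifs <;> rfl

lemma two_mul_card_filter_not_disjoint (h2 : IsUniform 2 E) (S : Finset ℕ) :
    2 * #{e ∈ E | ¬Disjoint e S} = ∑ x ∈ S, (#(nbrs E x) + #(nbrs E x \ S)) := by
  rw [sum_add_distrib, sum_card_nbrs_sdiff h2]
  simp_rw [← card_filter_mem_eq_card_nbrs h2]
  rw [sum_card_filter_mem, ← sum_add_distrib, card_filter, mul_sum]
  refine sum_congr rfl fun e he => ?_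
  rw [← two_mul_indicator_not_disjoint (h2 e he)]
  split_ifs <;> rfl

def Dominates (E : Finset (Finset ℕ)) (D : Finset ℕ) : Prop :=
  ∀ x ∈ hVerts E, x ∈ D ∨ ∃ u ∈ D, x ∈ nbrs E u

def IsDomSlack (E : Finset (Finset ℕ)) (s : ℕ) : Prop :=
  ∃ D, Dominates E D ∧ s + #D ≤ #(hVerts E)

lemma IsDomSlack.mono {t : ℕ} (hs : IsDomSlack E s) (h : t ≤ s) : IsDomSlack E t :=
  let ⟨D, hD, hcard⟩ := hs; ⟨D, hD, by omega⟩

lemma isDomSlack_empty : IsDomSlack ∅ 0 := ⟨∅, by simp [Dominates, hVerts], by simp⟩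

lemma IsDomSlack.extend (hE' : E' ⊆ E) (hs : IsDomSlack E' s) (hC : C ⊆ hVerts E)
    (hdisj : Disjoint (hVerts E') (closedNbhd E C)) :
    IsDomSlack E (s + #(closedNbhd E C) - #C) := by
  obtain ⟨D', hD', hcard⟩ := hs
  set N := closedNbhd E C
  refine ⟨C ∪ D' ∪ (hVerts E \ (N ∪ hVerts E')), fun x hx => ?_, ?_⟩
  · by_cases hxN : x ∈ N
    · rcases mem_union.1 hxN with h | h
      · exact Or.inl (by simp [h])
      · obtain ⟨c, hc, hxc⟩ := mem_biUnion.1 h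
        exact Or.inr ⟨c, by simp [hc], hxc⟩
    by_cases hxE' : x ∈ hVerts E'
    · rcases hD' x hxE' with h | ⟨u, hu, hxu⟩
      · exact Or.inl (by simp [h])
      · exact Or.inr ⟨u, by simp [hu], nbrs_mono hE' hxu⟩
    · exact Or.inl (by simp [hx, hxN, hxE'])
  · have hsub : N ∪ hVerts E' ⊆ hVerts E :=
      union_subset (closedNbhd_subset_hVerts hC) (hVerts_mono hE')
    have hrest : #(hVerts E \ (N ∪ hVerts E')) + #N + #(hVerts E') = #(hVerts E) := by
      rw [card_sdiff_of_subset hsub, card_union_of_disjoint hdisj.symm]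
      have := card_le_card hsub
      rw [card_union_of_disjoint hdisj.symm] at this
      omega
    have hCN : #C ≤ #N := card_le_card subset_union_left
    have := card_union_le (C ∪ D') (hVerts E \ (N ∪ hVerts E'))
    have := card_union_le C D'
    omega

lemma IsDomSlack.of_twin (hw : w ∈ hVerts E) (hu : u ∈ hVerts {e ∈ E | w ∉ e})
    (huw : u ≠ w)
    (htw : insert u (nbrs E u) = insert w (nbrs E w)) (hs : IsDomSlack {e ∈ E | w ∉ e} s) :
    IsDomSlack E (s + 1) := by
  obtain ⟨D', hD', hcard⟩ := hs
  set E' := {e ∈ E | w ∉ e}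
  have hE' : E' ⊆ E := filter_subset _ _
  have hwE' : w ∉ hVerts E' := fun h => by
    obtain ⟨e, he, hwe⟩ := mem_hVerts.1 h
    exact (mem_filter.1 he).2 hwe
  refine ⟨D' ∪ (hVerts E \ insert w (hVerts E')), fun x hx => ?_, ?_⟩
  · by_cases hxw : x = w
    · subst hxw
      have hxu : x ∈ nbrs E u := by
        have : x ∈ insert u (nbrs E u) := htw ▸ mem_insert_self x _
        exact (mem_insert.1 this).resolve_left (Ne.symm huw)
      rcases hD' u hu with h | ⟨d, hd, hud⟩
      · exact Or.inr ⟨u, mem_union_left _ h, hxu⟩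
      · have hdu := mem_nbrs.1 (mem_nbrs_comm.1 hud)
        have hdx : d ≠ x := fun h => (mem_filter.1 hdu.2).2 (by simp [h])
        have : d ∈ insert x (nbrs E x) :=
          htw ▸ mem_insert_of_mem (mem_nbrs.2 ⟨hdu.1, hE' hdu.2⟩)
        exact Or.inr ⟨d, mem_union_left _ hd,
          mem_nbrs_comm.1 ((mem_insert.1 this).resolve_left hdx)⟩
    by_cases hxE' : x ∈ hVerts E'
    · rcases hD' x hxE' with h | ⟨d, hd, hxd⟩
      · exact Or.inl (mem_union_left _ h)
      · exact Or.inr ⟨d, mem_union_left _ hd, nbrs_mono hE' hxd⟩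
    · exact Or.inl (by simp [hx, hxw, hxE'])
  · have hsub : insert w (hVerts E') ⊆ hVerts E := insert_subset hw (hVerts_mono hE')
    have := card_le_card hsub
    rw [card_insert_of_notMem hwE'] at this
    have := card_union_le D' (hVerts E \ insert w (hVerts E'))
    rw [card_sdiff_of_subset hsub, card_insert_of_notMem hwE'] at this
    omega

lemma hVerts_P4 : hVerts P₄ = {0, 1, 2, 3} := by decide

lemma P4_eq : P₄ = {{0, 1}, {1, 2}, {2, 3}} := by decide

lemma IsCopy.mono {H : Finset (Finset ℕ)} (h : F ⊆ E) : IsCopy H F → IsCopy H E :=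
  fun ⟨f, hf, hH⟩ => ⟨f, hf, fun e he => h (hH e he)⟩

lemma isCopy_P4_iff : IsCopy P₄ F ↔ ∃ a b c d : ℕ,
    a ≠ b ∧ a ≠ c ∧ a ≠ d ∧ b ≠ c ∧ b ≠ d ∧ c ≠ d ∧
      {a, b} ∈ F ∧ {b, c} ∈ F ∧ {c, d} ∈ F := by
  constructor
  · rintro ⟨f, hinj, hmem⟩
    rw [hVerts_P4] at hinj
    refine ⟨f 0, f 1, f 2, f 3, ?_, ?_, ?_, ?_, ?_, ?_, ?_, ?_, ?_⟩
    any_goals exact hinj.ne (by simp) (by simp) (by simp)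
    · simpa using hmem {0, 1} (by simp [P4_eq])
    · simpa using hmem {1, 2} (by simp [P4_eq])
    · simpa using hmem {2, 3} (by simp [P4_eq])
  · rintro ⟨a, b, c, d, hab, hac, had, hbc, hbd, hcd, h1, h2, h3⟩
    refine ⟨fun n => if n = 0 then a else if n = 1 then b else if n = 2 then c else d, ?_, ?_⟩
    · rw [hVerts_P4]
      intro x hx y hy hxy
      simp only [coe_insert, Set.mem_insert_iff, coe_singleton, Set.mem_singleton_iff] at hx hy
      rcases hx with rfl | rfl | rfl | rfl <;> rcases hy with rfl | rfl | rfl | rfl <;> simp_all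
    · rw [P4_eq]
      intro e he
      simp only [mem_insert, mem_singleton] at he
      rcases he with rfl | rfl | rfl <;> simpa

lemma not_isCopy_P4_empty : ¬IsCopy P₄ ∅ := by simp [isCopy_P4_iff]

lemma not_isCopy_P4_of_forall_eq_pair (p : ℕ → ℕ)
    (hF : ∀ e ∈ F, ∃ x ∉ D, p x ∈ D ∧ e = {x, p x}) : ¬IsCopy P₄ F := by
  have key : ∀ a b, {a, b} ∈ F →
      (a ∉ D ∧ b ∈ D ∧ b = p a) ∨ (b ∉ D ∧ a ∈ D ∧ a = p b) := by
    intro a b hab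
    obtain ⟨x, hx, hpx, he⟩ := hF _ hab
    rcases pair_eq_pair_iff.1 he with ⟨rfl, rfl⟩ | ⟨rfl, rfl⟩
    exacts [Or.inl ⟨hx, hpx, rfl⟩, Or.inr ⟨hx, hpx, rfl⟩]
  rw [isCopy_P4_iff]
  rintro ⟨a, b, c, d, -, hac, -, -, hbd, -, h1, h2, h3⟩
  rcases key b c h2 with ⟨hb, -, rfl⟩ | ⟨hc, -, rfl⟩
  · rcases key a b h1 with ⟨-, hb', -⟩ | ⟨-, -, rfl⟩
    exacts [hb hb', hac rfl]
  · rcases key _ d h3 with ⟨-, -, rfl⟩ | ⟨-, hc', -⟩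
    exacts [hbd rfl, hc hc']

lemma IsDomSlack.exists_P4_free (hs : IsDomSlack E s) :
    ∃ F ⊆ E, ¬IsCopy P₄ F ∧ s ≤ #F := by
  obtain ⟨D, hD, hcard⟩ := hs
  have : ∀ x, ∃ u, x ∈ hVerts E \ D → u ∈ D ∧ x ∈ nbrs E u := fun x => by
    by_cases hx : x ∈ hVerts E \ D
    · obtain ⟨hxE, hxD⟩ := mem_sdiff.1 hx
      obtain ⟨u, hu, hxu⟩ := (hD x hxE).resolve_left hxD
      exact ⟨u, fun _ => ⟨hu, hxu⟩⟩
    · exact ⟨0, fun h => absurd h hx⟩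
  choose p hp using this
  refine ⟨(hVerts E \ D).image fun x => {x, p x}, ?_, ?_, ?_⟩
  · intro e he
    obtain ⟨x, hx, rfl⟩ := mem_image.1 he
    rw [pair_comm]
    exact (mem_nbrs.1 (hp x hx).2).2
  · refine not_isCopy_P4_of_forall_eq_pair (D := D) p fun e he => ?_
    obtain ⟨x, hx, rfl⟩ := mem_image.1 he
    exact ⟨x, (mem_sdiff.1 hx).2, (hp x hx).1, rfl⟩
  · rw [card_image_of_injOn]
    · have := le_card_sdiff D (hVerts E)
      omega
    · intro x hx y hy hxy
      rcases pair_eq_pair_iff.1 hxy with ⟨h, -⟩ | ⟨h, -⟩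
      · exact h
      · exact absurd (h ▸ (hp y hy).1) (mem_sdiff.1 hx).2

lemma IsDomSlack.extend_singleton (hE' : E' ⊆ E) (hs : IsDomSlack E' s) (hv : v ∈ hVerts E)
    (hdisj : Disjoint (hVerts E') (insert v (nbrs E v))) : IsDomSlack E (s + #(nbrs E v)) := by
  have := hs.extend hE' (singleton_subset_iff.2 hv) (by rwa [closedNbhd_singleton])
  rwa [closedNbhd_singleton, card_insert_of_notMem not_mem_nbrs_self, card_singleton,
    Nat.add_sub_assoc (by omega), Nat.add_sub_cancel] at this

/-- Vizing's bound `m ≤ (n - γ)(n - γ + 2)/2` on the domination number `γ`, where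
`IsDomSlack E s` encodes `γ ≤ n - s`. -/
def VizingBound (E : Finset (Finset ℕ)) : Prop :=
  ∃ s, IsDomSlack E s ∧ 2 * #E ≤ s * (s + 2)

lemma VizingBound.of_twins (h2 : IsUniform 2 E) (hmax : ∀ x, #(nbrs E x) ≤ #(nbrs E v))
    (hwu : w ∈ nbrs E u) (htw : insert u (nbrs E u) = insert w (nbrs E w))
    (ih : VizingBound {e ∈ E | w ∉ e}) : VizingBound E := by
  obtain ⟨s, hs, hm⟩ := ih
  set E' := {e ∈ E | w ∉ e}
  have hE' : E' ⊆ E := filter_subset _ _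
  have hcard := card_filter_not_mem_add_card_nbrs (w := w) h2
  have huw : u ≠ w := (mem_nbrs.1 hwu).1.symm
  have huw' : u ∈ nbrs E w := mem_nbrs_comm.1 hwu
  have hdeg : #(nbrs E u) = #(nbrs E w) := by
    simpa [card_insert_of_notMem not_mem_nbrs_self] using congrArg card htw
  obtain ⟨z, hz⟩ : (nbrs E v).Nonempty :=
    card_pos.1 ((card_pos.2 ⟨u, huw'⟩).trans_le (hmax w))
  rcases Nat.lt_or_ge (#(nbrs E w)) 2 with hw1 | hw2
  · -- `{u, w}` is an isolated edge
    have hnu : nbrs E u = {w} := (eq_singleton_iff_unique_mem.2 ⟨hwu, fun y hy =>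
      card_le_one.1 (by omega) y hy w hwu⟩)
    refine ⟨s + 1, ?_, by nlinarith⟩
    have := hs.extend_singleton hE' (mem_hVerts_of_mem_nbrs hwu) ?_
    · rwa [hnu, card_singleton] at this
    rw [hnu, disjoint_left]
    intro x hx hxuw
    obtain ⟨e, he, hxe⟩ := mem_hVerts.1 hx
    obtain ⟨heE, hwe⟩ := mem_filter.1 he
    rcases mem_insert.1 hxuw with rfl | hxw
    · obtain ⟨y, hyx, rfl⟩ := exists_eq_pair (h2 e heE) hxe
      have : y ∈ nbrs E x := mem_nbrs.2 ⟨hyx, heE⟩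
      rw [hnu, mem_singleton] at this
      exact hwe (by simp [this])
    · exact hwe (mem_singleton.1 hxw ▸ hxe)
  rcases Nat.lt_or_ge (#(nbrs E w)) (s + 2) with hws | hws
  · -- `u` survives the deletion of `w`, and whatever dominates `u` also dominates `w`
    obtain ⟨y, hy, hyw⟩ := exists_mem_ne (show 1 < #(nbrs E u) by omega) w
    have hu : u ∈ hVerts E' := mem_hVerts.2 ⟨{u, y}, mem_filter.2 ⟨(mem_nbrs.1 hy).2,
      by simp [huw.symm, hyw.symm]⟩, by simp⟩
    exact ⟨s + 1, hs.of_twin (mem_hVerts_of_mem_nbrs huw') hu huw htw, by nlinarith⟩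
  · -- dominate by `v` and everything outside its closed neighbourhood
    have hD := isDomSlack_empty.extend_singleton (empty_subset E) (mem_hVerts_of_mem_nbrs hz)
      (by simp [hVerts])
    have := hmax w
    exact ⟨#(nbrs E v), by simpa using hD, by nlinarith⟩

lemma lt_or_one_le_card_sdiff_of_ne (hw : w ∈ nbrs E v)
    (htw : insert v (nbrs E v) ≠ insert w (nbrs E w)) :
    #(nbrs E w) < #(nbrs E v) ∨ 1 ≤ #(nbrs E w \ insert v (nbrs E v)) := by
  by_contra! h
  have hsub : insert w (nbrs E w) ⊆ insert v (nbrs E v) :=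
    insert_subset (mem_insert_of_mem hw) (sdiff_eq_empty_iff_subset.1 (card_eq_zero.1 (by omega)))
  refine htw (eq_of_subset_of_card_le hsub ?_).symm
  rw [card_insert_of_notMem not_mem_nbrs_self, card_insert_of_notMem not_mem_nbrs_self]
  omega

lemma two_mul_card_not_disjoint_closedNbhd_le (h2 : IsUniform 2 E)
    (hmax : ∀ x, #(nbrs E x) ≤ #(nbrs E v))
    (htw : ∀ w ∈ nbrs E v, insert v (nbrs E v) ≠ insert w (nbrs E w)) :
    2 * #{e ∈ E | ¬Disjoint e (insert v (nbrs E v))} ≤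
      #(nbrs E v) *
        (#(nbrs E v) + 2 * (nbrs E v).sup fun w => #(nbrs E w \ insert v (nbrs E v))) := by
  have hterm : ∀ w ∈ nbrs E v, #(nbrs E w) + #(nbrs E w \ insert v (nbrs E v)) + 1 ≤
      #(nbrs E v) + 2 * (nbrs E v).sup fun w => #(nbrs E w \ insert v (nbrs E v)) := by
    intro w hw
    have := le_sup (f := fun w => #(nbrs E w \ insert v (nbrs E v))) hw
    have := hmax w
    rcases lt_or_one_le_card_sdiff_of_ne hw (htw w hw) <;> omega
  rw [two_mul_card_filter_not_disjoint h2, sum_insert not_mem_nbrs_self,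
    sdiff_eq_empty_iff_subset.2 (subset_insert v _), card_empty, add_zero]
  have := sum_le_sum hterm
  rw [sum_add_distrib, sum_const, smul_eq_mul, mul_one, sum_const, smul_eq_mul] at this
  rw [mul_add] at this ⊢
  omega

lemma insert_union_sdiff_subset_closedNbhd_pair :
    insert v (nbrs E v) ∪ (nbrs E w \ insert v (nbrs E v)) ⊆ closedNbhd E {v, w} := by
  intro x hx
  simp only [closedNbhd, mem_union, mem_insert, mem_sdiff, mem_biUnion, mem_singleton] at hx ⊢
  rcases hx with (rfl | hx) | ⟨hx, -⟩
  · exact Or.inl (Or.inl rfl)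
  · exact Or.inr ⟨v, Or.inl rfl, hx⟩
  · exact Or.inr ⟨w, Or.inr rfl, hx⟩

lemma VizingBound.of_no_twins (h2 : IsUniform 2 E) (hmax : ∀ x, #(nbrs E x) ≤ #(nbrs E v))
    (hv : v ∈ hVerts E) (htw : ∀ w ∈ nbrs E v, insert v (nbrs E v) ≠ insert w (nbrs E w))
    (ih : VizingBound {e ∈ E | Disjoint e (insert v (nbrs E v))}) : VizingBound E := by
  obtain ⟨s, hs, hm⟩ := ih
  have hsplit :=
    card_filter_add_card_filter_not (s := E) (fun e => Disjoint e (insert v (nbrs E v)))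
  have hcount := two_mul_card_not_disjoint_closedNbhd_le h2 hmax htw
  set o := (nbrs E v).sup fun w => #(nbrs E w \ insert v (nbrs E v))
  rcases Nat.lt_or_ge o (s + 2) with hos | hos
  · -- dominate the closed neighbourhood of `v` by `v`, the rest as in the remaining graph
    have hdisj : Disjoint (hVerts {e ∈ E | Disjoint e (insert v (nbrs E v))})
        (insert v (nbrs E v)) := by
      refine disjoint_left.2 fun x hx hxN => ?_
      obtain ⟨e, he, hxe⟩ := mem_hVerts.1 hx
      exact disjoint_left.1 (mem_filter.1 he).2 hxe hxN
    refine ⟨s + #(nbrs E v), hs.extend_singleton (filter_subset _ _) hv hdisj, ?_⟩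
    nlinarith
  · -- dominate by `v`, a neighbour `w` with most neighbours outside `N[v]`, and all vertices
    -- outside `N[v] ∪ N[w]`
    obtain ⟨w, hw, hwo⟩ := exists_mem_eq_sup (nbrs E v) (nbrs_nonempty h2 hv)
      fun w => #(nbrs E w \ insert v (nbrs E v))
    have hvw : v ≠ w := fun h => not_mem_nbrs_self (h ▸ hw)
    have hC : {v, w} ⊆ hVerts E :=
      insert_subset hv (singleton_subset_iff.2 (nbrs_subset_hVerts hw))
    have hcl : #(nbrs E v) + 1 + o ≤ #(closedNbhd E {v, w}) := by
      have := card_le_card (insert_union_sdiff_subset_closedNbhd_pair (E := E) (v := v) (w := w))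
      rwa [card_union_of_disjoint disjoint_sdiff, card_insert_of_notMem not_mem_nbrs_self,
        ← hwo] at this
    refine ⟨#(nbrs E v) + o - 1, (isDomSlack_empty.extend (empty_subset E) hC
      (by simp [hVerts])).mono ?_, ?_⟩
    · rw [card_pair hvw]
      omega
    · clear_value o
      obtain ⟨t, rfl⟩ : ∃ t, o = t + 1 := ⟨o - 1, by omega⟩
      rw [← add_assoc, Nat.add_sub_cancel]
      nlinarith

theorem vizingBound (h2 : IsUniform 2 E) : VizingBound E := by
  induction E using Finset.strongInduction with
  | H E ih =>
    obtain rfl | ⟨e, he⟩ := E.eq_empty_or_nonempty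
    · exact ⟨0, isDomSlack_empty, by simp⟩
    obtain ⟨x, hx⟩ := card_pos.1 (h2 e he ▸ two_pos : 0 < e.card)
    obtain ⟨v, hv, hmax⟩ := exists_forall_card_nbrs_le ⟨x, mem_hVerts.2 ⟨e, he, hx⟩⟩
    by_cases htw : ∃ u, ∃ w ∈ nbrs E u, insert u (nbrs E u) = insert w (nbrs E w)
    · obtain ⟨u, w, hwu, htw⟩ := htw
      have hlt : {e ∈ E | w ∉ e} ⊂ E :=
        filter_ssubset.2 ⟨{u, w}, (mem_nbrs.1 hwu).2, by simp⟩
      exact .of_twins h2 hmax hwu htw (ih _ hlt (IsUniform.mono h2 hlt.subset))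
    · push Not at htw
      obtain ⟨e, he, hve⟩ := mem_hVerts.1 hv
      have hlt : {e ∈ E | Disjoint e (insert v (nbrs E v))} ⊂ E :=
        filter_ssubset.2 ⟨e, he, not_disjoint_iff.2 ⟨v, hve, mem_insert_self v _⟩⟩
      exact .of_no_twins h2 hmax hv (htw v) (ih _ hlt (IsUniform.mono h2 hlt.subset))

lemma exists_P4_free_subset_two_mul_card_sdiff_le {r : ℕ} (h2 : IsUniform 2 E)
    (hm : 2 * #E ≤ (r + 1) ^ 2) : ∃ F ⊆ E, ¬IsCopy P₄ F ∧ 2 * (#E - #F) ≤ r ^ 2 := by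
  by_cases hsmall : 2 * #E ≤ r ^ 2
  · exact ⟨∅, empty_subset E, not_isCopy_P4_empty, by simpa using hsmall⟩
  obtain ⟨s, hs, hvz⟩ := vizingBound h2
  obtain ⟨F, hFE, hF, hsF⟩ := hs.exists_P4_free
  refine ⟨F, hFE, hF, ?_⟩
  have hsq : r ^ 2 = r * r := sq r
  have hsq' : (r + 1) ^ 2 = r * r + 2 * r + 1 := by ring
  have hss : s * (s + 2) = s * s + 2 * s := by ring
  rcases le_or_gt s r with hsr | hsr
  · have := Nat.mul_le_mul hsr hsr
    omega
  · omega

lemma not_arrows_P4 {r : ℕ} (h2 : IsUniform 2 E) (hr : 0 < r) (hm : 2 * #E ≤ r ^ 2) :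
    ¬Arrows r E P₄ := by
  induction r, hr using Nat.le_induction generalizing E with
  | base =>
    obtain rfl : E = ∅ := card_eq_zero.1 (by simp at hm; omega)
    intro h
    obtain ⟨c, hc⟩ := h fun _ => 0
    exact not_isCopy_P4_empty (by simpa using hc)
  | succ r hr ih =>
    obtain ⟨F, hFE, hF, hm'⟩ := exists_P4_free_subset_two_mul_card_sdiff_le h2 hm
    have hcard : #(E \ F) = #E - #F := card_sdiff_of_subset hFE
    obtain ⟨χ, hχ⟩ :
        ∃ χ : Finset ℕ → Fin r, ∀ c, ¬IsCopy P₄ {e ∈ E \ F | χ e = c} := by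
      simpa [Arrows] using ih (IsUniform.mono h2 sdiff_subset) (hcard ▸ hm')
    intro harr
    obtain ⟨c, hc⟩ := harr fun e => if e ∈ F then Fin.last r else (χ e).castSucc
    rcases Fin.eq_castSucc_or_eq_last c with ⟨c, rfl⟩ | rfl
    · refine hχ c (IsCopy.mono (fun e he => ?_) hc)
      by_cases heF : e ∈ F
      · simp [heF, (Fin.castSucc_ne_last c).symm] at he
      · simp_all
    · refine hF (IsCopy.mono (fun e he => ?_) hc)
      by_contra heF
      simp [heF] at he

lemma isCopy_P4_of_mem_nbrs {a : ℕ} (hv : 2 < #(nbrs E v)) (ha : a ∈ nbrs E v)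
    (ha' : 1 < #(nbrs E a)) : IsCopy P₄ E := by
  obtain ⟨x, hx, hxv⟩ := exists_mem_ne ha' v
  obtain ⟨b, hb⟩ : (((nbrs E v).erase a).erase x).Nonempty := by
    rw [← card_pos]
    have := pred_card_le_card_erase (s := nbrs E v) (a := a)
    have := pred_card_le_card_erase (s := (nbrs E v).erase a) (a := x)
    omega
  obtain ⟨hbx, hba, hb⟩ := by simpa only [mem_erase] using hb
  obtain ⟨hav, hva⟩ := mem_nbrs.1 ha
  obtain ⟨hbv, hvb⟩ := mem_nbrs.1 hb
  obtain ⟨hxa, hax⟩ := mem_nbrs.1 hx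
  exact isCopy_P4_iff.2 ⟨b, v, a, x, hbv, hba, hbx, hav.symm, hxv.symm, hxa.symm,
    pair_comm v b ▸ hvb, hva, hax⟩

lemma isCopy_P4_of_card_lt {V : Finset ℕ} (h2 : IsUniform 2 E) (hV : hVerts E ⊆ V)
    (hlt : #V < #E) : IsCopy P₄ E := by
  induction V using Finset.strongInduction generalizing E with
  | H V ih =>
    by_cases hlow : ∃ v ∈ V, #(nbrs E v) ≤ 1
    · obtain ⟨v, hv, hdeg⟩ := hlow
      have hsub : hVerts {e ∈ E | v ∉ e} ⊆ V.erase v := fun x hx => by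
        obtain ⟨e, he, hxe⟩ := mem_hVerts.1 hx
        obtain ⟨heE, hve⟩ := mem_filter.1 he
        exact mem_erase.2 ⟨fun h => hve (h ▸ hxe), hV (mem_hVerts.2 ⟨e, heE, hxe⟩)⟩
      have := card_filter_not_mem_add_card_nbrs (w := v) h2
      have := card_erase_of_mem hv
      refine IsCopy.mono (filter_subset _ _) (ih _ (erase_ssubset hv)
        (IsUniform.mono h2 (filter_subset _ _)) hsub ?_)
      have := card_pos.2 ⟨v, hv⟩
      omega
    · push Not at hlow
      have hsum : ∑ _ ∈ V, 2 < ∑ x ∈ V, #(nbrs E x) := by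
        rw [sum_card_nbrs h2 hV, sum_const, smul_eq_mul]
        omega
      obtain ⟨v, hv, hdeg⟩ := exists_lt_of_sum_lt hsum
      obtain ⟨a, ha⟩ := card_pos.1 (show 0 < #(nbrs E v) by omega)
      exact isCopy_P4_of_mem_nbrs hdeg ha (hlow a (hV (nbrs_subset_hVerts ha)))

def completeEdges (n : ℕ) : Finset (Finset ℕ) := powersetCard 2 (range n)

lemma isUniform_completeEdges (n : ℕ) : IsUniform 2 (completeEdges n) :=
  fun _ he => (mem_powersetCard.1 he).2

lemma hVerts_completeEdges_subset (n : ℕ) : hVerts (completeEdges n) ⊆ range n :=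
  biUnion_subset.2 fun _ he => (mem_powersetCard.1 he).1

lemma card_completeEdges (r : ℕ) : #(completeEdges (2 * r + 2)) = (r + 1) * (2 * r + 1) := by
  rw [completeEdges, card_powersetCard, card_range, Nat.choose_two_right,
    show 2 * r + 2 - 1 = 2 * r + 1 by omega, show 2 * r + 2 = 2 * (r + 1) by ring, mul_assoc,
    Nat.mul_div_cancel_left _ two_pos]

lemma arrows_completeEdges (r : ℕ) : Arrows r (completeEdges (2 * r + 2)) P₄ := by
  intro χ
  obtain ⟨c, -, hc⟩ := exists_lt_card_fiber_of_mul_lt_card_of_maps_to (f := χ) (n := 2 * r + 2)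
    (fun _ _ => mem_univ _) (by rw [card_univ, Fintype.card_fin, card_completeEdges]; nlinarith)
  refine ⟨c, isCopy_P4_of_card_lt (IsUniform.mono (isUniform_completeEdges _) (filter_subset _ _))
    ((hVerts_mono (filter_subset _ _)).trans (hVerts_completeEdges_subset _)) ?_⟩
  rwa [card_range]

end SizeRamseyP4

open SizeRamseyP4

theorem stmt3 (r : ℕ) (hr : 2 ≤ r) :
    (r : ℝ) ^ 2 / 2 < sizeRamsey 2 r (hPath 2 1 4) ∧
      sizeRamsey 2 r (hPath 2 1 4) ≤ (r + 1) * (2 * r + 1) := by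
  have hK : (r + 1) * (2 * r + 1) ∈
      {m | ∃ G, IsUniform 2 G ∧ Arrows r G (hPath 2 1 4) ∧ #G = m} :=
    ⟨_, isUniform_completeEdges _, arrows_completeEdges r, card_completeEdges r⟩
  refine ⟨?_, Nat.sInf_le hK⟩
  obtain ⟨G, hG, hGr, hGc⟩ := Nat.sInf_mem ⟨_, hK⟩
  have hlow : r ^ 2 < 2 * #G := by
    by_contra! h
    exact not_arrows_P4 hG (by omega) h hGr
  rw [div_lt_iff₀ two_pos]
  exact_mod_cast (show r ^ 2 < sizeRamsey 2 r (hPath 2 1 4) * 2 by rw [sizeRamsey, ← hGc]; omega)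
end

section
/- Let r, k ≥ 2 and 1 ≤ ℓ ≤ k/2, and let n ≥ k satisfy (k-ℓ) | (n-ℓ). Then R̂_r(P_n^{(k,ℓ)}) ≤ R̂_r(P_{(n-ℓ)/(k-ℓ)+1}), where P_{(n-ℓ)/(k-ℓ)+1} is the graph path on (n-ℓ)/(k-ℓ)+1 vertices. -/
open Finset

/-!
A graph `G` arrowing the path with `m` edges is blown up into a `k`-graph with at most `|G|`
edges: each vertex `v` becomes `ℓ` copies of itself, and each edge `uv` becomes the `k`-edge
formed by the copies of `u` and `v` together with `k - 2ℓ` vertices private to `uv`. A colouring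
of the blow-up pulls back to `G`, and a monochromatic path `v₀ v₁ … v_m` of `G` gives the
monochromatic `(k,ℓ)`-path whose `i`-th edge is the blow-up of `v_{i-1} v_i`; consecutive edges
meet exactly in the `ℓ` copies of their common vertex.

That the size-Ramsey number of the graph path is attained at all comes from `K_N →_r P` for
`N = m^r + 1`. Label each vertex by the lengths of the longest increasing monochromatic paths of
each colour ending there, capped at `m`: along an edge `uv` with `u < v` the entry of its colour
strictly increases, so the `N` labels are distinct and some colour reaches length `m`.
-/

lemma sizeRamsey_le_card {k r : ℕ} {G H : Finset (Finset ℕ)} (hG : IsUniform k G)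
    (hGH : Arrows r G H) : sizeRamsey k r H ≤ G.card :=
  Nat.sInf_le ⟨G, hG, hGH, rfl⟩

lemma exists_card_eq_sizeRamsey {k r : ℕ} {G H : Finset (Finset ℕ)} (hG : IsUniform k G)
    (hGH : Arrows r G H) :
    ∃ G', IsUniform k G' ∧ Arrows r G' H ∧ G'.card = sizeRamsey k r H :=
  Nat.sInf_mem (s := {m | ∃ G, IsUniform k G ∧ Arrows r G H ∧ G.card = m})
    ⟨G.card, G, hG, hGH, rfl⟩

lemma pathWithEdges_two_one (m : ℕ) :
    pathWithEdges 2 1 m = (range m).image fun i => {i, i + 1} := by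
  refine image_congr fun i _ => ?_
  ext x
  simp only [mem_image, mem_range, mem_insert, mem_singleton]
  constructor
  · rintro ⟨j, hj, rfl⟩
    omega
  · rintro (rfl | rfl)
    exacts [⟨0, by omega, by omega⟩, ⟨1, by omega, by omega⟩]

lemma hVerts_pathWithEdges_subset {k l : ℕ} (hlk : l ≤ k) (m : ℕ) :
    hVerts (pathWithEdges k l m) ⊆ range (m * (k - l) + l) := by
  intro x hx
  simp only [hVerts, pathWithEdges, mem_biUnion, id, mem_image, mem_range] at hx ⊢
  obtain ⟨-, ⟨i, hi, rfl⟩, hx⟩ := hx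
  obtain ⟨j, hj, rfl⟩ := mem_image.1 hx
  have := Nat.mul_le_mul_right (k - l) (Nat.succ_le_of_lt hi)
  rw [Nat.succ_mul] at this
  have := mem_range.1 hj
  omega

lemma mem_hVerts_pathWithEdges_two_one {m i : ℕ} (hm : m ≠ 0) (hi : i ≤ m) :
    i ∈ hVerts (pathWithEdges 2 1 m) := by
  simp only [hVerts, pathWithEdges_two_one, mem_biUnion, id, mem_image, mem_range]
  rcases hi.lt_or_eq with hi | rfl
  · exact ⟨_, ⟨i, hi, rfl⟩, by simp⟩
  · refine ⟨_, ⟨i - 1, by omega, rfl⟩, ?_⟩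
    simp [Nat.sub_add_cancel (Nat.one_le_iff_ne_zero.2 hm)]

lemma isCopy_pathWithEdges_two_one {m : ℕ} {G : Finset (Finset ℕ)} {f : ℕ → ℕ}
    (hf : Set.InjOn f (Set.Iic m)) (hG : ∀ i < m, {f i, f (i + 1)} ∈ G) :
    IsCopy (pathWithEdges 2 1 m) G := by
  refine ⟨f, hf.mono fun x hx => ?_, ?_⟩
  · have := hVerts_pathWithEdges_subset (by norm_num) m hx
    simp only [mem_range] at this
    simp only [Set.mem_Iic]
    omega
  · simp only [pathWithEdges_two_one, forall_mem_image, mem_range, image_insert,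
      image_singleton]
    exact hG

lemma IsCopy.exists_injOn_of_pathWithEdges_two_one {m : ℕ} {G : Finset (Finset ℕ)}
    (hm : m ≠ 0) (h : IsCopy (pathWithEdges 2 1 m) G) :
    ∃ f : ℕ → ℕ, Set.InjOn f (Set.Iic m) ∧ ∀ i < m, {f i, f (i + 1)} ∈ G := by
  obtain ⟨f, hf, hG⟩ := h
  refine ⟨f, hf.mono fun i hi => mem_hVerts_pathWithEdges_two_one hm hi, fun i hi => ?_⟩
  have := hG _ (by rw [pathWithEdges_two_one]; exact mem_image_of_mem _ (mem_range.2 hi))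
  rw [image_insert] at this
  exact this

section IncPath

variable {α : Type*} {χ : Finset ℕ → α} {c : α} {j m u v N : ℕ}

def IncPath (χ : Finset ℕ → α) (c : α) (j v : ℕ) : Prop :=
  ∃ g : ℕ → ℕ, g j = v ∧ ∀ i < j, g i < g (i + 1) ∧ χ {g i, g (i + 1)} = c

lemma incPath_zero (χ : Finset ℕ → α) (c : α) (v : ℕ) : IncPath χ c 0 v :=
  ⟨fun _ => v, rfl, by simp⟩

lemma IncPath.snoc (h : IncPath χ c j u) (huv : u < v) (hc : χ {u, v} = c) :
    IncPath χ c (j + 1) v := by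
  obtain ⟨g, rfl, hg⟩ := h
  refine ⟨fun i => if i ≤ j then g i else v, by simp, fun i hi => ?_⟩
  rcases (Nat.lt_succ_iff.1 hi).lt_or_eq with hi | rfl
  · simpa [hi.le, Nat.succ_le_of_lt hi] using hg i hi
  · simpa using ⟨huv, hc⟩

lemma IncPath.isCopy [DecidableEq α] (h : IncPath χ c m v) (hv : v < N) :
    IsCopy (pathWithEdges 2 1 m) (((range N).powersetCard 2).filter fun e => χ e = c) := by
  obtain ⟨g, rfl, hg⟩ := h
  have hmono : StrictMonoOn g (Set.Iic m) := strictMonoOn_Iic_of_lt_succ fun i hi => (hg i hi).1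
  refine isCopy_pathWithEdges_two_one hmono.injOn fun i hi => ?_
  have hlt (i' : ℕ) (hi' : i' ≤ m) : g i' < N :=
    (hmono.monotoneOn hi' (Set.mem_Iic.2 le_rfl) hi').trans_lt hv
  simp only [mem_filter, mem_powersetCard, insert_subset_iff, singleton_subset_iff, mem_range]
  exact ⟨⟨⟨hlt i hi.le, hlt (i + 1) hi⟩, card_pair (hg i hi).1.ne⟩, (hg i hi).2⟩

end IncPath

lemma arrows_completeGraph_pathWithEdges (r m : ℕ) :
    Arrows r ((range (m ^ r + 1)).powersetCard 2) (pathWithEdges 2 1 m) := by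
  classical
  intro χ
  by_contra! hno
  let L (c : Fin r) (v : ℕ) : ℕ := Nat.findGreatest (IncPath χ c · v) m
  have hL (c v) : IncPath χ c (L c v) v :=
    Nat.findGreatest_spec (P := (IncPath χ c · v)) (Nat.zero_le m) (incPath_zero χ c v)
  have hLm (c v) (hv : v < m ^ r + 1) : L c v < m :=
    (Nat.findGreatest_le m).lt_of_ne fun h => hno c (((show L c v = m from h) ▸ hL c v).isCopy hv)
  have hLlt (u v) (huv : u < v) (hv : v < m ^ r + 1) : L (χ {u, v}) u < L (χ {u, v}) v :=
    Nat.le_findGreatest (hLm _ u (huv.trans hv)) ((hL _ u).snoc huv rfl)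
  have hmaps : Set.MapsTo (fun v c => L c v) (range (m ^ r + 1))
      (Fintype.piFinset fun _ : Fin r => range m) := fun v hv => by
    simpa using fun c => hLm c v (mem_range.1 hv)
  obtain ⟨u, hu, v, hv, hne, heq⟩ := exists_ne_map_eq_of_card_lt_of_maps_to (by simp) hmaps
  rw [mem_range] at hu hv
  rcases hne.lt_or_gt with h | h
  · exact (hLlt u v h hv).ne (congrFun heq _)
  · exact (hLlt v u h hu).ne' (pair_comm u v ▸ congrFun heq _)

/-- Vertices of the blow-up, encoded into `ℕ` by `Encodable.encode`: `inl (v, t)` is the `t`-th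
copy of the vertex `v`, and `inr (e, t)` the `t`-th vertex private to the edge `e`. -/
abbrev BlowupVertex := (ℕ × ℕ) ⊕ (Finset ℕ × ℕ)

def blowupSlots (k l : ℕ) (e : Finset ℕ) : Finset BlowupVertex :=
  (e ×ˢ range l).disjSum ({e} ×ˢ range (k - 2 * l))

def blowup (k l : ℕ) (e : Finset ℕ) : Finset ℕ :=
  (blowupSlots k l e).image Encodable.encode

lemma card_blowupSlots {k l : ℕ} (hl : 2 * l ≤ k) {e : Finset ℕ} (he : e.card = 2) :
    (blowupSlots k l e).card = k := by
  rw [blowupSlots, card_disjSum, card_product, card_product, he, card_singleton, card_range,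
    card_range]
  omega

lemma card_blowup {k l : ℕ} (hl : 2 * l ≤ k) {e : Finset ℕ} (he : e.card = 2) :
    (blowup k l e).card = k := by
  rw [blowup, card_image_of_injective _ Encodable.encode_injective, card_blowupSlots hl he]

lemma IsUniform.image_blowup {k l : ℕ} (hl : 2 * l ≤ k) {G : Finset (Finset ℕ)}
    (hG : IsUniform 2 G) : IsUniform k (G.image (blowup k l)) := by
  simp only [IsUniform, forall_mem_image]
  exact fun e he => card_blowup hl (hG e he)

/-- Where the vertex `x = i(k-ℓ) + j`, `j < k - ℓ`, of the `(k,ℓ)`-path goes, given the graph path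
`f 0, f 1, …`: the first `ℓ` vertices of each block are copies of `f i`, the others are private to
the edge `{f i, f (i+1)}`. -/
def pathSlot (k l : ℕ) (f : ℕ → ℕ) (x : ℕ) : BlowupVertex :=
  if x % (k - l) < l then .inl (f (x / (k - l)), x % (k - l))
  else .inr ({f (x / (k - l)), f (x / (k - l) + 1)}, x % (k - l) - l)

lemma pathSlot_mul_add {k l i j : ℕ} (f : ℕ → ℕ) (hj : j < k - l) :
    pathSlot k l f (i * (k - l) + j) =
      if j < l then .inl (f i, j) else .inr ({f i, f (i + 1)}, j - l) := by
  have hd : 0 < k - l := by omega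
  have hdiv : (i * (k - l) + j) / (k - l) = i := by
    rw [add_comm, Nat.add_mul_div_right _ _ hd, Nat.div_eq_of_lt hj, zero_add]
  have hmod : (i * (k - l) + j) % (k - l) = j := by
    rw [add_comm, Nat.add_mul_mod_self_right, Nat.mod_eq_of_lt hj]
  rw [pathSlot, hdiv, hmod]

lemma image_pathSlot_pathEdge {k l i : ℕ} (hl : 2 * l ≤ k) {f : ℕ → ℕ} (hf : f i ≠ f (i + 1)) :
    ((range k).image fun j => i * (k - l) + j).image (pathSlot k l f) =
      blowupSlots k l {f i, f (i + 1)} := by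
  refine eq_of_superset_of_card_ge (fun s hs => ?_) ?_
  · rw [image_image]
    rw [blowupSlots] at hs
    rcases s with ⟨v, t⟩ | ⟨e, t⟩
    · rw [inl_mem_disjSum, mem_product, mem_insert, mem_singleton, mem_range] at hs
      rcases hs with ⟨rfl | rfl, ht⟩
      · exact mem_image.2 ⟨t, mem_range.2 (by omega), by
          rw [Function.comp_apply, pathSlot_mul_add f (by omega), if_pos ht]⟩
      · refine mem_image.2 ⟨k - l + t, mem_range.2 (by omega), ?_⟩
        rw [Function.comp_apply, ← add_assoc, ← Nat.succ_mul, pathSlot_mul_add f (by omega),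
          if_pos ht]
    · rw [inr_mem_disjSum, mem_product, mem_singleton, mem_range] at hs
      obtain ⟨rfl, ht⟩ := hs
      refine mem_image.2 ⟨l + t, mem_range.2 (by omega), ?_⟩
      rw [Function.comp_apply, pathSlot_mul_add f (by omega), if_neg (by omega),
        Nat.add_sub_cancel_left]
  · calc _ ≤ (range k).card := card_image_le.trans card_image_le
      _ = (blowupSlots k l {f i, f (i + 1)}).card := by
        rw [card_range, card_blowupSlots hl (card_pair hf)]

lemma Set.InjOn.eq_of_pair_eq {f : ℕ → ℕ} {m a b : ℕ} (hf : Set.InjOn f (Set.Iic m))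
    (ha : a < m) (hb : b < m) (h : ({f a, f (a + 1)} : Finset ℕ) = {f b, f (b + 1)}) :
    a = b := by
  have hmem (x : ℕ) (hx : x ≤ m) (hfx : f x ∈ ({f b, f (b + 1)} : Finset ℕ)) :
      x = b ∨ x = b + 1 := by
    rw [Finset.mem_insert, Finset.mem_singleton] at hfx
    exact hfx.imp (hf hx (Set.mem_Iic.2 hb.le)) (hf hx (Set.mem_Iic.2 hb))
  have h1 := hmem a ha.le (h ▸ by simp)
  have h2 := hmem (a + 1) ha (h ▸ by simp)
  omega

lemma injOn_pathSlot {k l m : ℕ} (hk : 0 < k) (hl : 2 * l ≤ k) {f : ℕ → ℕ}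
    (hf : Set.InjOn f (Set.Iic m)) :
    Set.InjOn (pathSlot k l f) (range (m * (k - l) + l)) := by
  have hd : 0 < k - l := by omega
  have hdiv_le {x : ℕ} (hx : x < m * (k - l) + l) : x / (k - l) ≤ m :=
    Nat.lt_succ_iff.1 ((Nat.div_lt_iff_lt_mul hd).2 (by rw [Nat.succ_mul]; omega))
  have hdiv_lt {x : ℕ} (hx : x < m * (k - l) + l) (hlx : l ≤ x % (k - l)) :
      x / (k - l) < m := by
    have := Nat.div_add_mod x (k - l)
    exact Nat.lt_of_mul_lt_mul_left (a := k - l) (by rw [mul_comm _ m]; omega)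
  intro x hx y hy hxy
  simp only [coe_range, Set.mem_Iio] at hx hy
  rw [← Nat.div_add_mod x (k - l), ← Nat.div_add_mod y (k - l)]
  by_cases hlx : x % (k - l) < l <;> by_cases hly : y % (k - l) < l <;>
    simp only [pathSlot, hlx, hly, if_true, if_false, reduceCtorEq, Sum.inl.injEq,
      Sum.inr.injEq, Prod.mk.injEq] at hxy
  · rw [hf (hdiv_le hx) (hdiv_le hy) hxy.1, hxy.2]
  · rw [hf.eq_of_pair_eq (hdiv_lt hx (by omega)) (hdiv_lt hy (by omega)) hxy.1]
    omega

lemma Arrows.image_blowup {k l r m : ℕ} (hk : 0 < k) (hl : 2 * l ≤ k) {G : Finset (Finset ℕ)}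
    (hG : Arrows r G (pathWithEdges 2 1 m)) :
    Arrows r (G.image (blowup k l)) (pathWithEdges k l m) := by
  intro χ
  obtain ⟨c, hc⟩ := hG (χ ∘ blowup k l)
  refine ⟨c, ?_⟩
  rcases eq_or_ne m 0 with rfl | hm
  · exact ⟨id, by simp [pathWithEdges, hVerts], by simp [pathWithEdges]⟩
  obtain ⟨f, hf, hfG⟩ := hc.exists_injOn_of_pathWithEdges_two_one hm
  refine ⟨Encodable.encode ∘ pathSlot k l f,
    Encodable.encode_injective.comp_injOn ((injOn_pathSlot hk hl hf).mono
      (hVerts_pathWithEdges_subset (by omega) m)), ?_⟩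
  simp only [pathWithEdges, forall_mem_image, mem_range]
  intro i hi
  have hfi : f i ≠ f (i + 1) := fun h => by
    simpa using hf (Set.mem_Iic.2 hi.le) (Set.mem_Iic.2 hi) h
  obtain ⟨he, hχ⟩ := mem_filter.1 (hfG i hi)
  rw [← image_image, image_pathSlot_pathEdge hl hfi]
  exact mem_filter.2 ⟨mem_image_of_mem _ he, hχ⟩

lemma sizeRamsey_pathWithEdges_le {k l : ℕ} (hk : 0 < k) (hl : 2 * l ≤ k) (r m : ℕ) :
    sizeRamsey k r (pathWithEdges k l m) ≤ sizeRamsey 2 r (pathWithEdges 2 1 m) := by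
  obtain ⟨G, hG, hGP, hcard⟩ := exists_card_eq_sizeRamsey
    (fun e he => (mem_powersetCard.1 he).2) (arrows_completeGraph_pathWithEdges r m)
  calc sizeRamsey k r (pathWithEdges k l m) ≤ (G.image (blowup k l)).card :=
        sizeRamsey_le_card (hG.image_blowup hl) (hGP.image_blowup hk hl)
    _ ≤ G.card := card_image_le
    _ = _ := hcard

theorem stmt11_general (k r l n : ℕ) (hk : 2 ≤ k) (hl2 : 2 * l ≤ k) :
    sizeRamsey k r (hPath k l n) ≤ sizeRamsey 2 r (hPath 2 1 ((n - l) / (k - l) + 1)) := by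
  have hPath_two_one :
      hPath 2 1 ((n - l) / (k - l) + 1) = pathWithEdges 2 1 ((n - l) / (k - l)) := by
    simp [hPath]
  rw [hPath_two_one]
  exact sizeRamsey_pathWithEdges_le (by omega) hl2 r _

theorem stmt11 (k r l n : ℕ) (hk : 2 ≤ k) (hr : 2 ≤ r) (hl1 : 1 ≤ l) (hl2 : 2 * l ≤ k)
    (hn : k ≤ n) (hdvd : (k - l) ∣ (n - l)) :
    sizeRamsey k r (hPath k l n) ≤ sizeRamsey 2 r (hPath 2 1 ((n - l) / (k - l) + 1)) :=
  stmt11_general k r l n hk hl2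
end

section
/- Let r ≥ 2, k ≥ 2, 1 ≤ ℓ ≤ k-1 and let m be an integer with 1 ≤ m < k/(k-ℓ). Then R̂_r(P_{ℓ+(m+1)(k-ℓ)}^{(k,ℓ)}) ≤ R̂_r(P_{ℓ-1+(m+1)(k-ℓ)}^{(k-1,ℓ-1)}). -/
open Finset

/-
If a `(k-1)`-graph `G` arrows the `(k-1, ℓ-1)`-path, then the cone over `G`, obtained by adding
one new vertex `v` to every edge, is a `k`-graph with as many edges that arrows the `(k, ℓ)`-path
with `m + 1` edges. Indeed, as `m (k-ℓ) < k` all edges of that path contain the vertex `k - 1`,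
its link at `k - 1` is a `(k-1, ℓ-1)`-path, and a monochromatic copy of the link in `G` lifts to
the cone by sending `k - 1` to `v`. The right-hand side is attained because Ramsey graphs exist:
this is the finite hypergraph Ramsey theorem, derived from the infinite one by compactness.
-/

theorem mem_hVerts {G : Finset (Finset ℕ)} {x : ℕ} : x ∈ hVerts G ↔ ∃ e ∈ G, x ∈ e := by
  simp [hVerts]

theorem notMem_of_notMem_hVerts {G : Finset (Finset ℕ)} {v : ℕ} {e : Finset ℕ}
    (hv : v ∉ hVerts G) (he : e ∈ G) : v ∉ e :=
  fun hve => hv (mem_hVerts.mpr ⟨e, he, hve⟩)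

theorem mapsTo_hVerts {H G : Finset (Finset ℕ)} {f : ℕ → ℕ} (hf : ∀ e ∈ H, e.image f ∈ G) :
    Set.MapsTo f ↑(hVerts H) ↑(hVerts G) := by
  intro x hx
  obtain ⟨e, he, hxe⟩ := mem_hVerts.mp hx
  exact mem_hVerts.mpr ⟨_, hf e he, mem_image_of_mem f hxe⟩

theorem IsCopy.trans {A B C : Finset (Finset ℕ)} (hAB : IsCopy A B) (hBC : IsCopy B C) :
    IsCopy A C := by
  obtain ⟨f, hf, hfe⟩ := hAB
  obtain ⟨g, hg, hge⟩ := hBC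
  refine ⟨g ∘ f, hg.comp hf (mapsTo_hVerts hfe), fun e he => ?_⟩
  rw [← image_image]
  exact hge _ (hfe e he)

theorem Arrows.of_isCopy {r : ℕ} {G H H' : Finset (Finset ℕ)} (hG : Arrows r G H)
    (hH' : IsCopy H' H) : Arrows r G H' :=
  fun χ => (hG χ).imp fun _ hc => hH'.trans hc

theorem notMem_hVerts_image_erase {H : Finset (Finset ℕ)} {w : ℕ} :
    w ∉ (hVerts (H.image (·.erase w)) : Set ℕ) := by
  simp [mem_hVerts]

section Cone

variable {G : Finset (Finset ℕ)} {v : ℕ}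

theorem card_image_insert (hv : v ∉ hVerts G) : (G.image (insert v)).card = G.card := by
  refine card_image_of_injOn fun e he e' he' h => ?_
  simpa [erase_insert (notMem_of_notMem_hVerts hv he),
    erase_insert (notMem_of_notMem_hVerts hv he')] using congrArg (·.erase v) h

theorem IsUniform.image_insert {k : ℕ} (hG : IsUniform k G) (hv : v ∉ hVerts G) :
    IsUniform (k + 1) (G.image (insert v)) := by
  intro e he
  obtain ⟨e, he', rfl⟩ := mem_image.mp he
  rw [card_insert_of_notMem (notMem_of_notMem_hVerts hv he'), hG e he']

theorem Arrows.image_insert {r w : ℕ} {H : Finset (Finset ℕ)}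
    (hG : Arrows r G (H.image (·.erase w))) (hw : ∀ e ∈ H, w ∈ e) (hv : v ∉ hVerts G) :
    Arrows r (G.image (insert v)) H := by
  intro χ
  obtain ⟨c, f, hf, hfe⟩ := hG (χ ∘ insert v)
  have hfG := mapsTo_hVerts hfe
  have hwlink := notMem_hVerts_image_erase (H := H) (w := w)
  have hlink : (hVerts H : Set ℕ) ⊆ insert w ↑(hVerts (H.image (·.erase w))) := by
    intro x hx
    obtain ⟨e, he, hxe⟩ := mem_hVerts.mp hx
    by_cases hxw : x = w
    · exact Or.inl hxw
    · exact Or.inr (mem_hVerts.mpr ⟨_, mem_image_of_mem _ he, mem_erase.mpr ⟨hxw, hxe⟩⟩)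
  refine ⟨c, Function.update f w v, ((Set.injOn_insert hwlink).mpr ⟨?_, ?_⟩).mono hlink,
    fun e he => ?_⟩
  · exact hf.congr fun x hx => (Function.update_of_ne (ne_of_mem_of_not_mem hx hwlink) _ _).symm
  · rintro ⟨x, hx, hfx⟩
    rw [Function.update_self, Function.update_of_ne (ne_of_mem_of_not_mem hx hwlink)] at hfx
    obtain ⟨e, he, hxe⟩ := mem_hVerts.mp (hfG hx)
    exact notMem_of_notMem_hVerts hv (mem_filter.mp he).1 (hfx ▸ hxe)
  have hlinkedge := mem_filter.mp (hfe _ (mem_image_of_mem (·.erase w) he))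
  have himage : e.image (Function.update f w v) = insert v ((e.erase w).image f) := by
    conv_lhs => rw [← insert_erase (hw e he)]
    rw [Finset.image_insert, Function.update_self]
    congr 1
    exact image_congr fun x hx => Function.update_of_ne (ne_of_mem_erase hx) _ _
  rw [himage, mem_filter]
  exact ⟨mem_image_of_mem _ hlinkedge.1, hlinkedge.2⟩

end Cone

section InfiniteRamsey

theorem exists_strictMono_of_forall_infinite {P : ℕ → Set ℕ → Prop} (hP : ∀ a, Antitone (P a))
    (hstep : ∀ W : Set ℕ, W.Infinite →
      ∃ a ∈ W, ∃ W' ⊆ W, W'.Infinite ∧ (∀ x ∈ W', a < x) ∧ P a W')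
    {S : Set ℕ} (hS : S.Infinite) :
    ∃ a : ℕ → ℕ, StrictMono a ∧ (∀ n, a n ∈ S) ∧ ∀ n, P (a n) (a '' Set.Ioi n) := by
  choose! apex hapex next hnext hinf hlt hPnext using hstep
  set W : ℕ → Set ℕ := fun n => next^[n] S
  have hWsucc : ∀ n, W (n + 1) = next (W n) := fun n => Function.iterate_succ_apply' ..
  have hWinf : ∀ n, (W n).Infinite := by
    intro n
    induction n with
    | zero => exact hS
    | succ n ih => rw [hWsucc]; exact hinf _ ih
  have hWanti : Antitone W :=
    antitone_nat_of_succ_le fun n => by rw [hWsucc]; exact hnext _ (hWinf n)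
  have hmem : ∀ n, apex (W n) ∈ W n := fun n => hapex _ (hWinf n)
  have himage : ∀ n, (fun j => apex (W j)) '' Set.Ioi n ⊆ W (n + 1) := by
    rintro n _ ⟨j, hj, rfl⟩
    exact hWanti (Nat.succ_le_of_lt hj) (hmem j)
  refine ⟨fun n => apex (W n), strictMono_nat_of_lt_succ fun n => ?_,
    fun n => hWanti (Nat.zero_le n) (hmem n), fun n => hP _ (himage n) ?_⟩
  · exact hlt _ (hWinf n) _ (hWsucc n ▸ hmem (n + 1))
  · exact hWsucc n ▸ hPnext _ (hWinf n)

variable {α : Type*} (χ : Finset ℕ → α)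

/-- The colour of a `(q+1)`-set in the range of `a` is decided by its least element `a n`,
so the `a n` with an infinitely repeated colour `col n` span a homogeneous set. -/
theorem exists_infinite_homogeneous_of_strictMono [Finite α] {q : ℕ} {a : ℕ → ℕ}
    (ha : StrictMono a) {col : ℕ → α} (hcol : ∀ n (t : Finset ℕ), ↑t ⊆ a '' Set.Ioi n → t.card = q →
      χ (insert (a n) t) = col n) :
    ∃ c, (a '' (col ⁻¹' {c})).Infinite ∧
      ∀ t : Finset ℕ, ↑t ⊆ a '' (col ⁻¹' {c}) → t.card = q + 1 → χ t = c := by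
  obtain ⟨c, hc⟩ := Finite.exists_infinite_fiber col
  refine ⟨c, (Set.infinite_coe_iff.mp hc).image ha.injective.injOn, fun t ht hcard => ?_⟩
  have hne : t.Nonempty := card_pos.mp (by omega)
  obtain ⟨i, hi, hai⟩ := ht (t.min'_mem hne)
  have hrest : ↑(t.erase (a i)) ⊆ a '' Set.Ioi i := by
    intro y hy
    obtain ⟨j, -, rfl⟩ := ht (mem_of_mem_erase hy)
    exact ⟨j, ha.lt_iff_lt.mp (hai ▸ t.min'_lt_of_mem_erase_min' hne (hai ▸ hy)), rfl⟩
  have hait : a i ∈ t := hai ▸ t.min'_mem hne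
  calc χ t = χ (insert (a i) (t.erase (a i))) := by rw [insert_erase hait]
    _ = col i := hcol i _ hrest (by rw [card_erase_of_mem hait]; omega)
    _ = c := hi

theorem exists_infinite_homogeneous [Finite α] (q : ℕ) {S : Set ℕ} (hS : S.Infinite) :
    ∃ T ⊆ S, T.Infinite ∧ ∃ c, ∀ t : Finset ℕ, ↑t ⊆ T → t.card = q → χ t = c := by
  induction q generalizing χ S with
  | zero => exact ⟨S, subset_rfl, hS, χ ∅, fun t _ ht => by rw [card_eq_zero.mp ht]⟩
  | succ q ih =>
    let IsApex : ℕ → Set ℕ → Prop := fun a W =>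
      ∃ c, ∀ t : Finset ℕ, ↑t ⊆ W → t.card = q → χ (insert a t) = c
    have hanti : ∀ a, Antitone (IsApex a) :=
      fun a W W' hWW' ⟨c, hc⟩ => ⟨c, fun t ht => hc t (ht.trans hWW')⟩
    have hstep : ∀ W : Set ℕ, W.Infinite →
        ∃ a ∈ W, ∃ W' ⊆ W, W'.Infinite ∧ (∀ x ∈ W', a < x) ∧ IsApex a W' := by
      intro W hW
      obtain ⟨a, ha⟩ := hW.nonempty
      obtain ⟨T, hTsub, hT, hapex⟩ := ih (fun t => χ (insert a t)) (hW.sdiff (Set.finite_Iic a))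
      exact ⟨a, ha, T, hTsub.trans Set.sdiff_subset, hT,
        fun x hx => not_le.mp (hTsub hx).2, hapex⟩
    obtain ⟨a, ha, haS, hapex⟩ := exists_strictMono_of_forall_infinite hanti hstep hS
    choose col hcol using hapex
    obtain ⟨c, hinf, hc⟩ := exists_infinite_homogeneous_of_strictMono χ ha hcol
    exact ⟨_, Set.image_subset_iff.mpr fun n _ => haS n, hinf, c, hc⟩

end InfiniteRamsey

theorem Ultrafilter.exists_forall_eventually_eq {ι κ β : Type*} [Finite β] (U : Ultrafilter ι)
    (f : ι → κ → β) : ∃ g : κ → β, ∀ a, ∀ᶠ i in U, f i a = g a := by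
  choose g hg using fun a => (U.map (f · a)).eq_pure_of_finite
  exact ⟨g, fun a => show {g a} ∈ U.map (f · a) by rw [hg a]; exact Ultrafilter.mem_pure.mpr rfl⟩

/-- Compactness: an ultrafilter limit of colourings of the complete `q`-graphs on `range N`
without monochromatic copy of `H` colours all `q`-sets of `ℕ`, and a copy of `H` inside an
infinite homogeneous set for it is already monochromatic for one of the colourings. -/
theorem exists_arrows_powersetCard_range (q r : ℕ) {H : Finset (Finset ℕ)}
    (hH : IsUniform q H) : ∃ N, Arrows r ((range N).powersetCard q) H := by
  by_contra! hbad
  simp only [Arrows, not_forall, not_exists] at hbad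
  choose χN hχN using hbad
  let U := Filter.hyperfilter ℕ
  obtain ⟨χ, hχ⟩ := U.exists_forall_eventually_eq χN
  obtain ⟨T, -, hT, c, hc⟩ := exists_infinite_homogeneous χ q Set.infinite_univ
  let g : ℕ → ℕ := fun x => hT.natEmbedding T x
  have hg : Function.Injective g := Subtype.val_injective.comp (hT.natEmbedding T).injective
  have hgT : ∀ x, g x ∈ T := fun x => (hT.natEmbedding T x).2
  have hlarge : ∀ x, ∀ᶠ N in (U : Filter ℕ), x < N := fun x => Filter.hyperfilter_le_cofinite
    (by simpa [Nat.cofinite_eq_atTop] using Filter.eventually_gt_atTop x)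
  have hcopy : ∀ᶠ N in (U : Filter ℕ),
      ∀ e ∈ H, e.image g ∈ ((range N).powersetCard q).filter (χN N · = c) := by
    refine (Filter.eventually_all_finset H).mpr fun e he => ?_
    have hsub : ∀ᶠ N in (U : Filter ℕ), e.image g ⊆ range N := by
      simpa [subset_iff] using (Filter.eventually_all_finset (e.image g)).mpr fun x _ => hlarge x
    have hcard : (e.image g).card = q := by rw [card_image_of_injective _ hg, hH e he]
    have hcol : χ (e.image g) = c :=
      hc _ (by simpa [Set.subset_def] using fun x _ => hgT x) hcard
    filter_upwards [hsub, hχ (e.image g)] with N hN hχN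
    exact mem_filter.mpr ⟨mem_powersetCard.mpr ⟨hN, hcard⟩, hχN.trans hcol⟩
  obtain ⟨N, hN⟩ := hcopy.exists
  exact hχN N c ⟨g, hg.injOn, hN⟩

theorem exists_isUniform_arrows (r : ℕ) {q : ℕ} {H : Finset (Finset ℕ)} (hH : IsUniform q H) :
    ∃ G, IsUniform q G ∧ Arrows r G H := by
  obtain ⟨N, hN⟩ := exists_arrows_powersetCard_range q r hH
  exact ⟨_, fun e he => (mem_powersetCard.mp he).2, hN⟩

theorem sizeRamsey_succ_le_of_isCopy_link {q r w : ℕ} {H H' : Finset (Finset ℕ)}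
    (hw : ∀ e ∈ H, w ∈ e) (hlink : IsCopy (H.image (·.erase w)) H') (hH' : IsUniform q H') :
    sizeRamsey (q + 1) r H ≤ sizeRamsey q r H' := by
  obtain ⟨G, hG, hGH'⟩ := exists_isUniform_arrows r hH'
  unfold sizeRamsey
  obtain ⟨G, hG, hGH', hcard⟩ := Nat.sInf_mem
    (s := {n | ∃ G, IsUniform q G ∧ Arrows r G H' ∧ G.card = n}) ⟨_, G, hG, hGH', rfl⟩
  obtain ⟨v, hv⟩ := (hVerts G).exists_notMem
  exact Nat.sInf_le ⟨G.image (insert v), hG.image_insert hv,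
    (hGH'.of_isCopy hlink).image_insert hw hv, (card_image_insert hv).trans hcard⟩

section Paths

variable {k l m : ℕ}

theorem isUniform_pathWithEdges : IsUniform k (pathWithEdges k l m) := by
  intro e he
  obtain ⟨i, -, rfl⟩ := mem_image.mp he
  rw [card_image_of_injective _ (add_right_injective _), card_range]

theorem hPath_add_mul {d : ℕ} (hd : k - l = d) (hpos : 0 < d) :
    hPath k l (l + m * d) = pathWithEdges k l m := by
  rw [hPath, Nat.add_sub_cancel_left, hd, Nat.mul_div_cancel _ hpos]

theorem mem_of_mem_pathWithEdges_succ (h : m * (k - l) ≤ k) :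
    ∀ e ∈ pathWithEdges (k + 1) (l + 1) (m + 1), k ∈ e := by
  intro e he
  simp only [pathWithEdges, Nat.add_sub_add_right] at he
  obtain ⟨i, hi, rfl⟩ := mem_image.mp he
  have : i * (k - l) ≤ m * (k - l) := Nat.mul_le_mul_right _ (by simpa [Nat.lt_succ_iff] using hi)
  exact mem_image.mpr ⟨k - i * (k - l), mem_range.mpr (by omega), by omega⟩

theorem isCopy_image_erase_pathWithEdges_succ (h : m * (k - l) ≤ k) :
    IsCopy ((pathWithEdges (k + 1) (l + 1) (m + 1)).image (·.erase k))
      (pathWithEdges k l (m + 1)) := by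
  -- shift the vertices above the deleted vertex `k` down by one
  refine ⟨fun x => if x < k then x else x - 1, fun x hx y hy hxy => ?_, fun e he => ?_⟩
  · have hxk : x ≠ k := ne_of_mem_of_not_mem hx notMem_hVerts_image_erase
    have hyk : y ≠ k := ne_of_mem_of_not_mem hy notMem_hVerts_image_erase
    simp only at hxy
    split_ifs at hxy <;> omega
  · obtain ⟨e, hpath, rfl⟩ := mem_image.mp he
    obtain ⟨i, hi, rfl⟩ := mem_image.mp hpath
    simp only [Nat.add_sub_add_right]
    have : i * (k - l) ≤ m * (k - l) := Nat.mul_le_mul_right _ (by simpa [Nat.lt_succ_iff] using hi)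
    refine mem_image.mpr ⟨i, hi, ?_⟩
    ext y
    simp only [mem_image, mem_erase, mem_range]
    constructor
    · rintro ⟨j, hj, rfl⟩
      by_cases hjk : i * (k - l) + j < k
      · exact ⟨i * (k - l) + j, ⟨by omega, j, by omega, rfl⟩, if_pos hjk⟩
      · exact ⟨i * (k - l) + j + 1, ⟨by omega, j + 1, by omega, by omega⟩, by
          rw [if_neg (by omega)]; omega⟩
    · rintro ⟨x, ⟨hxk, j, hj, rfl⟩, rfl⟩
      split_ifs with hlt
      · exact ⟨j, by omega, rfl⟩
      · exact ⟨j - 1, by omega, by omega⟩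

end Paths

theorem stmt13_general (k r l m : ℕ) (hl1 : 1 ≤ l) (hl2 : l ≤ k - 1)
    (hm2 : m * (k - l) < k) :
    sizeRamsey k r (hPath k l (l + (m + 1) * (k - l))) ≤
      sizeRamsey (k - 1) r (hPath (k - 1) (l - 1) (l - 1 + (m + 1) * (k - l))) := by
  obtain ⟨l, rfl⟩ : ∃ l', l = l' + 1 := ⟨l - 1, by omega⟩
  obtain ⟨k, rfl⟩ : ∃ k', k = k' + 1 := ⟨k - 1, by omega⟩
  simp only [Nat.add_sub_cancel, Nat.add_sub_add_right] at hl2 hm2 ⊢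
  have hm : m * (k - l) ≤ k := by omega
  rw [hPath_add_mul (Nat.add_sub_add_right k 1 l) (by omega), hPath_add_mul rfl (by omega)]
  exact sizeRamsey_succ_le_of_isCopy_link (mem_of_mem_pathWithEdges_succ hm)
    (isCopy_image_erase_pathWithEdges_succ hm) isUniform_pathWithEdges

theorem stmt13 (k r l m : ℕ) (hk : 2 ≤ k) (hr : 2 ≤ r) (hl1 : 1 ≤ l) (hl2 : l ≤ k - 1)
    (hm1 : 1 ≤ m) (hm2 : m * (k - l) < k) :
    sizeRamsey k r (hPath k l (l + (m + 1) * (k - l))) ≤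
      sizeRamsey (k - 1) r (hPath (k - 1) (l - 1) (l - 1 + (m + 1) * (k - l))) :=
  stmt13_general k r l m hl1 hl2 hm2
end
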